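/- arXiv:2107.14705 — 10 statements merged into one kernel-verified Lean document; each statement's English description precedes it below -/
import Mathlib

section
/- Under the MMSB setup, the matrix V_{τ,1} = 𝒟_τ^{1/2} V satisfies the ideal simplex identity V_{τ,1} = Π · V_{τ,1}(𝓘,:). Moreover, for any two nodes i and j with Π(i,:) = Π(j,:), one has V_{τ,1}(i,:) = V_{τ,1}(j,:). -/
open Matrix BigOperators

/-- Euclidean norm of the `i`-th row of a matrix. -/
noncomputable def rowNorm {m k : ℕ} (M : Matrix (Fin m) (Fin k) ℝ) (i : Fin m) : ℝ :=
  Real.sqrt (∑ j, (M i j) ^ 2)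

/-- Lemma 3.1: under the MMSB setup, `V_{τ,1} = 𝒟_τ^{1/2} V` satisfies the
ideal simplex identity `V_{τ,1} = Π ⬝ V_{τ,1}(𝓘,:)`, and nodes with equal membership rows have
equal rows of `V_{τ,1}`. -/
theorem stmt_0
    {n K : ℕ} (hn : 0 < n) (hK : 0 < K) (hKn : K ≤ n)
    (Pi : Matrix (Fin n) (Fin K) ℝ)
    (hPi_nonneg : ∀ i k, 0 ≤ Pi i k)
    (hPi_rowsum : ∀ i, ∑ k, Pi i k = 1)
    (hPi_rank : Pi.rank = K)
    (hpure : ∀ k : Fin K, ∃ i : Fin n, ∀ l, Pi i l = if l = k then 1 else 0)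
    (Pt : Matrix (Fin K) (Fin K) ℝ)
    (hPt_symm : Pt.IsSymm)
    (hPt_nonneg : ∀ k l, 0 ≤ Pt k l)
    (hPt_rank : Pt.rank = K)
    (hPt_le_one : ∀ k l, Pt k l ≤ 1)
    (hPt_max : ∃ k l, Pt k l = 1)
    (ρ τ : ℝ) (hρ0 : 0 < ρ) (hρ1 : ρ ≤ 1) (hτ : 0 ≤ τ)
    (Om : Matrix (Fin n) (Fin n) ℝ) (hOm : Om = Pi * (ρ • Pt) * Piᵀ)
    (deg : Fin n → ℝ) (hdeg : ∀ i, deg i = ∑ j, Om i j)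
    (hpos : ∀ i, 0 < deg i + τ)
    (Ltau : Matrix (Fin n) (Fin n) ℝ)
    (hLtau : Ltau = Matrix.diagonal (fun i => (Real.sqrt (deg i + τ))⁻¹) * Om *
      Matrix.diagonal (fun i => (Real.sqrt (deg i + τ))⁻¹))
    (Idx : Fin K → Fin n) (hIdx : Pi.submatrix Idx id = 1)
    (V : Matrix (Fin n) (Fin K) ℝ) (e : Fin K → ℝ)
    (hVorth : Vᵀ * V = 1) (he : ∀ k, e k ≠ 0)
    (hVE : Ltau = V * Matrix.diagonal e * Vᵀ)
    (Vtau1 : Matrix (Fin n) (Fin K) ℝ)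
    (hVtau1 : Vtau1 = Matrix.diagonal (fun i => Real.sqrt (deg i + τ)) * V) :
    Vtau1 = Pi * Vtau1.submatrix Idx id ∧
      ∀ i j : Fin n, Pi i = Pi j → Vtau1 i = Vtau1 j := by
  have hsq : ∀ i, Real.sqrt (deg i + τ) ≠ 0 := fun i =>
    ne_of_gt (Real.sqrt_pos.mpr (hpos i))
  set dE : Matrix (Fin K) (Fin K) ℝ := Matrix.diagonal (fun k => (e k)⁻¹) with hdE
  set Dh : Matrix (Fin n) (Fin n) ℝ :=
    Matrix.diagonal (fun i => Real.sqrt (deg i + τ)) with hDh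
  set Di : Matrix (Fin n) (Fin n) ℝ :=
    Matrix.diagonal (fun i => (Real.sqrt (deg i + τ))⁻¹) with hDi
  have hDhDi : Dh * Di = 1 := by
    rw [hDh, hDi, Matrix.diagonal_mul_diagonal]
    have : (fun i => Real.sqrt (deg i + τ) * (Real.sqrt (deg i + τ))⁻¹)
        = fun _ : Fin n => (1 : ℝ) := by
      funext i; exact mul_inv_cancel₀ (hsq i)
    rw [this, Matrix.diagonal_one]
  have hEE : Matrix.diagonal e * dE = 1 := by
    rw [hdE, Matrix.diagonal_mul_diagonal]
    have : (fun k => e k * (e k)⁻¹) = fun _ : Fin K => (1 : ℝ) := by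
      funext k; exact mul_inv_cancel₀ (he k)
    rw [this, Matrix.diagonal_one]
  have hLV : Ltau * V = V * Matrix.diagonal e := by
    rw [hVE, Matrix.mul_assoc, Matrix.mul_assoc, hVorth, Matrix.mul_one]
  have hV : V = Ltau * V * dE := by
    rw [hLV, Matrix.mul_assoc, hEE, Matrix.mul_one]
  set B : Matrix (Fin K) (Fin K) ℝ := (ρ • Pt) * (Piᵀ * (Di * (V * dE))) with hB
  have hfac : Vtau1 = Pi * B := by
    rw [hVtau1]
    conv_lhs => rw [hV, hLtau, hOm]
    rw [hB]
    calc Dh * (Di * (Pi * (ρ • Pt) * Piᵀ) * Di * V * dE)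
        = (Dh * Di) * (Pi * ((ρ • Pt) * (Piᵀ * (Di * (V * dE))))) := by
          simp only [Matrix.mul_assoc]
      _ = Pi * ((ρ • Pt) * (Piᵀ * (Di * (V * dE)))) := by
          rw [hDhDi, Matrix.one_mul]
  have hsub : Vtau1.submatrix Idx id = B := by
    rw [hfac]
    have : (Pi * B).submatrix Idx id = (Pi.submatrix Idx id) * B := by
      ext k l
      simp [Matrix.mul_apply, Matrix.submatrix_apply]
    rw [this, hIdx, Matrix.one_mul]
  constructor
  · rw [hsub, ← hfac]
  · intro i j hij
    rw [hfac]
    funext l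
    simp only [Matrix.mul_apply]
    rw [hij]
end

section
/- Under the MMSB setup, the K×K matrix V_{τ,1}(𝓘,:) is nonsingular, Π = V_{τ,1} · V_{τ,1}(𝓘,:)^{-1}, the matrix Z_1 := V · V_{τ,1}(𝓘,:)^{-1} equals 𝒟_τ^{-1/2} Π, and for every node i, Π(i,:) = Z_1(i,:) / ‖Z_1(i,:)‖_1, where ‖·‖_1 is the ℓ_1 norm of the row. -/
open Matrix BigOperators

/-- `V_{τ,1}(𝓘,:)` is nonsingular, `Π = V_{τ,1} V_{τ,1}(𝓘,:)⁻¹`,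
`Z₁ := V V_{τ,1}(𝓘,:)⁻¹ = 𝒟_τ^{-1/2} Π`, and each row of `Π` is the ℓ₁-normalization of the
corresponding row of `Z₁`. -/
theorem stmt_1
    {n K : ℕ} (hn : 0 < n) (hK : 0 < K) (hKn : K ≤ n)
    (Pi : Matrix (Fin n) (Fin K) ℝ)
    (hPi_nonneg : ∀ i k, 0 ≤ Pi i k)
    (hPi_rowsum : ∀ i, ∑ k, Pi i k = 1)
    (hPi_rank : Pi.rank = K)
    (hpure : ∀ k : Fin K, ∃ i : Fin n, ∀ l, Pi i l = if l = k then 1 else 0)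
    (Pt : Matrix (Fin K) (Fin K) ℝ)
    (hPt_symm : Pt.IsSymm)
    (hPt_nonneg : ∀ k l, 0 ≤ Pt k l)
    (hPt_rank : Pt.rank = K)
    (hPt_le_one : ∀ k l, Pt k l ≤ 1)
    (hPt_max : ∃ k l, Pt k l = 1)
    (ρ τ : ℝ) (hρ0 : 0 < ρ) (hρ1 : ρ ≤ 1) (hτ : 0 ≤ τ)
    (Om : Matrix (Fin n) (Fin n) ℝ) (hOm : Om = Pi * (ρ • Pt) * Piᵀ)
    (deg : Fin n → ℝ) (hdeg : ∀ i, deg i = ∑ j, Om i j)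
    (hpos : ∀ i, 0 < deg i + τ)
    (Ltau : Matrix (Fin n) (Fin n) ℝ)
    (hLtau : Ltau = Matrix.diagonal (fun i => (Real.sqrt (deg i + τ))⁻¹) * Om *
      Matrix.diagonal (fun i => (Real.sqrt (deg i + τ))⁻¹))
    (Idx : Fin K → Fin n) (hIdx : Pi.submatrix Idx id = 1)
    (V : Matrix (Fin n) (Fin K) ℝ) (e : Fin K → ℝ)
    (hVorth : Vᵀ * V = 1) (he : ∀ k, e k ≠ 0)
    (hVE : Ltau = V * Matrix.diagonal e * Vᵀ)
    (Vtau1 : Matrix (Fin n) (Fin K) ℝ)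
    (hVtau1 : Vtau1 = Matrix.diagonal (fun i => Real.sqrt (deg i + τ)) * V)
    (Z1 : Matrix (Fin n) (Fin K) ℝ)
    (hZ1 : Z1 = V * (Vtau1.submatrix Idx id)⁻¹) :
    IsUnit (Vtau1.submatrix Idx id) ∧
    Pi = Vtau1 * (Vtau1.submatrix Idx id)⁻¹ ∧
    Z1 = Matrix.diagonal (fun i => (Real.sqrt (deg i + τ))⁻¹) * Pi ∧
    ∀ i k, Pi i k = Z1 i k / ∑ l, |Z1 i l| := by
  set dinv : Fin n → ℝ := fun i => (Real.sqrt (deg i + τ))⁻¹ with hdinv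
  have hsqpos : ∀ i, 0 < Real.sqrt (deg i + τ) := fun i => Real.sqrt_pos.mpr (hpos i)
  have hsqne : ∀ i, Real.sqrt (deg i + τ) ≠ 0 := fun i => (hsqpos i).ne'
  -- inverse of diagonal e
  have hE : Matrix.diagonal e * Matrix.diagonal (fun k => (e k)⁻¹) = 1 := by
    rw [Matrix.diagonal_mul_diagonal]
    convert Matrix.diagonal_one using 2
    exact funext fun k => mul_inv_cancel₀ (he k)
  set B : Matrix (Fin K) (Fin K) ℝ :=
    (ρ • Pt) * Piᵀ * Matrix.diagonal dinv * V * Matrix.diagonal (fun k => (e k)⁻¹) with hB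
  -- Ltau * V = V * diag e
  have h1 : Ltau * V = V * Matrix.diagonal e := by
    rw [hVE, Matrix.mul_assoc, hVorth, Matrix.mul_one]
  have h2 : V = Ltau * V * Matrix.diagonal (fun k => (e k)⁻¹) := by
    rw [h1, Matrix.mul_assoc, hE, Matrix.mul_one]
  -- V = D^{-1/2} Π B
  have hVeq : V = Matrix.diagonal dinv * Pi * B := by
    conv_lhs => rw [h2, hLtau, hOm]
    simp only [Matrix.mul_assoc, hB]
  -- Vtau1 = Π B
  have hDD : (Matrix.diagonal fun i => Real.sqrt (deg i + τ)) * Matrix.diagonal dinv = 1 := by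
    rw [Matrix.diagonal_mul_diagonal]
    convert Matrix.diagonal_one using 2
    exact funext fun i => mul_inv_cancel₀ (hsqne i)
  have hVtau1' : Vtau1 = Pi * B := by
    have key : (Matrix.diagonal fun i => Real.sqrt (deg i + τ)) *
        (Matrix.diagonal dinv * Pi * B) = Pi * B := by
      rw [Matrix.mul_assoc (Matrix.diagonal dinv), ← Matrix.mul_assoc, hDD, Matrix.one_mul]
    rw [hVtau1, hVeq]; exact key
  -- Vtau1(𝓘,:) = B
  have hsub : Vtau1.submatrix Idx id = B := by
    have : Vtau1.submatrix Idx id = Pi.submatrix Idx id * B := by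
      ext k l
      simp [hVtau1', Matrix.mul_apply, Matrix.submatrix_apply]
    rw [this, hIdx, Matrix.one_mul]
  -- B is a unit
  have hBunit : IsUnit B := by
    rw [← Matrix.mulVec_injective_iff_isUnit]
    intro x y hxy
    have hV : V.mulVec x = V.mulVec y := by
      rw [hVeq]
      simp only [← Matrix.mulVec_mulVec]
      rw [hxy]
    calc x = (Vᵀ * V).mulVec x := by rw [hVorth, Matrix.one_mulVec]
      _ = Vᵀ.mulVec (V.mulVec x) := by rw [Matrix.mulVec_mulVec]
      _ = Vᵀ.mulVec (V.mulVec y) := by rw [hV]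
      _ = (Vᵀ * V).mulVec y := by rw [Matrix.mulVec_mulVec]
      _ = y := by rw [hVorth, Matrix.one_mulVec]
  have hBdet : IsUnit B.det := (Matrix.isUnit_iff_isUnit_det B).mp hBunit
  have hBB : B * B⁻¹ = 1 := Matrix.mul_nonsing_inv B hBdet
  -- conclusion 2
  have hPiEq : Pi = Vtau1 * (Vtau1.submatrix Idx id)⁻¹ := by
    rw [hsub, hVtau1', Matrix.mul_assoc, hBB, Matrix.mul_one]
  -- conclusion 3
  have hZ1' : Z1 = Matrix.diagonal dinv * Pi := by
    rw [hZ1, hsub, hVeq, Matrix.mul_assoc, hBB, Matrix.mul_one]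
  refine ⟨hsub ▸ hBunit, hPiEq, hZ1', ?_⟩
  -- conclusion 4
  intro i k
  have hdinvpos : 0 < dinv i := inv_pos.mpr (hsqpos i)
  have happly : ∀ l, Z1 i l = dinv i * Pi i l := by
    intro l
    rw [hZ1', Matrix.diagonal_mul]
  have hsum : ∑ l, |Z1 i l| = dinv i := by
    have : ∀ l, |Z1 i l| = dinv i * Pi i l := by
      intro l
      rw [happly l, abs_of_nonneg (mul_nonneg hdinvpos.le (hPi_nonneg i l))]
    rw [Finset.sum_congr rfl fun l _ => this l, ← Finset.mul_sum, hPi_rowsum, mul_one]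
  rw [hsum, happly k, mul_comm, mul_div_assoc, div_self hdinvpos.ne', mul_one]
end

section
/- Under the MMSB setup, there exists Y_1 ∈ ℝ^{n×K} with all entries nonnegative and no row identically zero such that V_{*,1} = Y_1 · V_{*,1}(𝓘,:); explicitly, Y_1 = N_{M_1} Π 𝒟_τ^{1/2}(𝓘,𝓘) N_V^{-1}(𝓘,𝓘), where M_1 = Π 𝒟_τ^{1/2}(𝓘,𝓘) V(𝓘,:) and N_{M_1} is the n×n diagonal matrix with N_{M_1}(i,i) = 1/‖M_1(i,:)‖ (all diagonal entries positive). Moreover, for any two nodes i and j with Π(i,:) = Π(j,:), one has V_{*,1}(i,:) = V_{*,1}(j,:). -/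
open Matrix BigOperators

lemma rowNorm_nonneg {m k : ℕ} (M : Matrix (Fin m) (Fin k) ℝ) (i : Fin m) :
    0 ≤ rowNorm M i := Real.sqrt_nonneg _

lemma rowNorm_pos {m k : ℕ} (M : Matrix (Fin m) (Fin k) ℝ) (i : Fin m)
    (h : M i ≠ 0) : 0 < rowNorm M i := by
  unfold rowNorm
  apply Real.sqrt_pos.mpr
  obtain ⟨j, hj⟩ : ∃ j, M i j ≠ 0 := by
    by_contra hc; push_neg at hc; exact h (funext hc)
  exact Finset.sum_pos' (fun l _ => sq_nonneg _)
    ⟨j, Finset.mem_univ j, by positivity⟩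

/-- Lemma 3.3, Ideal Cone: there is a nonnegative `Y₁` with no zero row such
that `V_{*,1} = Y₁ V_{*,1}(𝓘,:)`, explicitly
`Y₁ = N_{M₁} Π 𝒟_τ^{1/2}(𝓘,𝓘) N_V^{-1}(𝓘,𝓘)` with all diagonal entries of `N_{M₁}` positive;
moreover equal membership rows give equal rows of `V_{*,1}`. -/
theorem stmt_2
    {n K : ℕ} (hn : 0 < n) (hK : 0 < K) (hKn : K ≤ n)
    (Pi : Matrix (Fin n) (Fin K) ℝ)
    (hPi_nonneg : ∀ i k, 0 ≤ Pi i k)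
    (hPi_rowsum : ∀ i, ∑ k, Pi i k = 1)
    (hPi_rank : Pi.rank = K)
    (hpure : ∀ k : Fin K, ∃ i : Fin n, ∀ l, Pi i l = if l = k then 1 else 0)
    (Pt : Matrix (Fin K) (Fin K) ℝ)
    (hPt_symm : Pt.IsSymm)
    (hPt_nonneg : ∀ k l, 0 ≤ Pt k l)
    (hPt_rank : Pt.rank = K)
    (hPt_le_one : ∀ k l, Pt k l ≤ 1)
    (hPt_max : ∃ k l, Pt k l = 1)
    (ρ τ : ℝ) (hρ0 : 0 < ρ) (hρ1 : ρ ≤ 1) (hτ : 0 ≤ τ)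
    (Om : Matrix (Fin n) (Fin n) ℝ) (hOm : Om = Pi * (ρ • Pt) * Piᵀ)
    (deg : Fin n → ℝ) (hdeg : ∀ i, deg i = ∑ j, Om i j)
    (hpos : ∀ i, 0 < deg i + τ)
    (Ltau : Matrix (Fin n) (Fin n) ℝ)
    (hLtau : Ltau = Matrix.diagonal (fun i => (Real.sqrt (deg i + τ))⁻¹) * Om *
      Matrix.diagonal (fun i => (Real.sqrt (deg i + τ))⁻¹))
    (Idx : Fin K → Fin n) (hIdx : Pi.submatrix Idx id = 1)
    (V : Matrix (Fin n) (Fin K) ℝ) (e : Fin K → ℝ)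
    (hVorth : Vᵀ * V = 1) (he : ∀ k, e k ≠ 0)
    (hVE : Ltau = V * Matrix.diagonal e * Vᵀ)
    (hVrow : ∀ i, V i ≠ 0)
    (Vstar1 : Matrix (Fin n) (Fin K) ℝ)
    (hVstar1 : ∀ i k, Vstar1 i k = V i k / rowNorm V i)
    (M1 : Matrix (Fin n) (Fin K) ℝ)
    (hM1 : M1 = Pi * Matrix.diagonal (fun k => Real.sqrt (deg (Idx k) + τ)) *
      V.submatrix Idx id)
    (Y1 : Matrix (Fin n) (Fin K) ℝ)
    (hY1 : Y1 = Matrix.diagonal (fun i => (rowNorm M1 i)⁻¹) * Pi *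
      Matrix.diagonal (fun k => Real.sqrt (deg (Idx k) + τ)) *
      Matrix.diagonal (fun k => rowNorm V (Idx k))) :
    (∀ i k, 0 ≤ Y1 i k) ∧
    (∀ i, Y1 i ≠ 0) ∧
    Vstar1 = Y1 * Vstar1.submatrix Idx id ∧
    (∀ i, 0 < (rowNorm M1 i)⁻¹) ∧
    (∀ i j : Fin n, Pi i = Pi j → Vstar1 i = Vstar1 j) := by
  set d : Fin n → ℝ := fun i => (Real.sqrt (deg i + τ))⁻¹ with hd
  have hspos : ∀ i, 0 < Real.sqrt (deg i + τ) := fun i => Real.sqrt_pos.mpr (hpos i)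
  have hdpos : ∀ i, 0 < d i := fun i => inv_pos.mpr (hspos i)
  -- eigen-equation
  have hLV : Ltau * V = V * Matrix.diagonal e := by
    rw [hVE]
    simp only [Matrix.mul_assoc, hVorth, Matrix.mul_one]
  have hEinv : Matrix.diagonal e * Matrix.diagonal (fun k => (e k)⁻¹)
      = (1 : Matrix (Fin K) (Fin K) ℝ) := by
    rw [Matrix.diagonal_mul_diagonal,
      show (fun k => e k * (e k)⁻¹) = fun _ => (1:ℝ) from funext fun k => mul_inv_cancel₀ (he k),
      Matrix.diagonal_one]
  set B : Matrix (Fin K) (Fin K) ℝ :=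
    (ρ • Pt) * Piᵀ * Matrix.diagonal d * V * Matrix.diagonal (fun k => (e k)⁻¹) with hB
  have hVfact : V = Matrix.diagonal d * (Pi * B) := by
    have h1 : V = Ltau * V * Matrix.diagonal (fun k => (e k)⁻¹) := by
      rw [hLV, Matrix.mul_assoc, hEinv, Matrix.mul_one]
    rw [h1, hB, hLtau, hOm]
    simp only [Matrix.mul_assoc]
  have hVentry : ∀ i l, V i l = d i * (Pi * B) i l := by
    intro i l
    rw [congrFun (congrFun hVfact i) l, Matrix.diagonal_mul]
  have hPiIdx : ∀ k m, Pi (Idx k) m = if k = m then 1 else 0 := by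
    intro k m
    have := congrFun (congrFun hIdx k) m
    simpa [Matrix.submatrix_apply, Matrix.one_apply] using this
  have hBentry : ∀ k l, B k l = Real.sqrt (deg (Idx k) + τ) * V (Idx k) l := by
    intro k l
    have h := hVentry (Idx k) l
    have h2 : (Pi * B) (Idx k) l = B k l := by
      rw [Matrix.mul_apply]
      simp [hPiIdx, ite_mul]
    rw [h2] at h
    rw [h, hd]
    rw [← mul_assoc, mul_inv_cancel₀ (hspos (Idx k)).ne', one_mul]
  have hMentry : ∀ i l, M1 i l
      = ∑ k, Pi i k * (Real.sqrt (deg (Idx k) + τ) * V (Idx k) l) := by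
    intro i l
    rw [hM1, Matrix.mul_apply]
    exact Finset.sum_congr rfl fun k _ => by
      rw [Matrix.mul_diagonal, Matrix.submatrix_apply, mul_assoc]
      rfl
  have hVM : ∀ i l, V i l = d i * M1 i l := by
    intro i l
    rw [hVentry i l, hMentry, Matrix.mul_apply]
    congr 1
    exact Finset.sum_congr rfl fun k _ => by rw [hBentry]
  have hM1row : ∀ i, M1 i ≠ 0 := by
    intro i h
    apply hVrow i
    funext l
    have hz : M1 i l = 0 := congrFun h l
    simp [hVM i l, hz]
  have hMpos : ∀ i, 0 < rowNorm M1 i := fun i => rowNorm_pos _ _ (hM1row i)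
  have hnormV : ∀ i, rowNorm V i = d i * rowNorm M1 i := by
    intro i
    unfold rowNorm
    have hsum : ∑ j, V i j ^ 2 = d i ^ 2 * ∑ j, M1 i j ^ 2 := by
      rw [Finset.mul_sum]
      exact Finset.sum_congr rfl fun j _ => by rw [hVM]; ring
    rw [hsum, Real.sqrt_mul (sq_nonneg _), Real.sqrt_sq (hdpos i).le]
  have hVstar : ∀ i l, Vstar1 i l = M1 i l / rowNorm M1 i := by
    intro i l
    rw [hVstar1, hVM, hnormV, mul_div_mul_left _ _ (hdpos i).ne']
  have hY1entry : ∀ i k, Y1 i k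
      = (rowNorm M1 i)⁻¹ * Pi i k * Real.sqrt (deg (Idx k) + τ) * rowNorm V (Idx k) := by
    intro i k
    rw [hY1, Matrix.mul_diagonal, Matrix.mul_diagonal, Matrix.diagonal_mul]
  refine ⟨?_, ?_, ?_, fun i => inv_pos.mpr (hMpos i), ?_⟩
  · intro i k
    rw [hY1entry]
    exact mul_nonneg (mul_nonneg (mul_nonneg (inv_pos.mpr (hMpos i)).le
      (hPi_nonneg i k)) (hspos _).le) (rowNorm_nonneg _ _)
  · intro i h
    obtain ⟨k, hk⟩ : ∃ k, Pi i k ≠ 0 := by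
      by_contra hc
      push_neg at hc
      have h1 := hPi_rowsum i
      rw [Finset.sum_eq_zero (fun k _ => hc k)] at h1
      exact one_ne_zero h1.symm
    have hz : Y1 i k = 0 := congrFun h k
    rw [hY1entry] at hz
    exact absurd hz (ne_of_gt (mul_pos (mul_pos (mul_pos (inv_pos.mpr (hMpos i))
      (lt_of_le_of_ne (hPi_nonneg i k) (Ne.symm hk))) (hspos _))
      (rowNorm_pos _ _ (hVrow _))))
  · ext i l
    rw [Matrix.mul_apply]
    have hcalc : ∑ k, Y1 i k * Vstar1.submatrix Idx id k l
        = (rowNorm M1 i)⁻¹ * M1 i l := by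
      rw [hMentry, Finset.mul_sum]
      refine Finset.sum_congr rfl fun k _ => ?_
      rw [Matrix.submatrix_apply, hY1entry, hVstar1]
      have hc : rowNorm V (Idx k) ≠ 0 := (rowNorm_pos _ _ (hVrow _)).ne'
      simp only [id_eq]
      rw [div_eq_mul_inv,
        show (rowNorm M1 i)⁻¹ * Pi i k * Real.sqrt (deg (Idx k) + τ) * rowNorm V (Idx k) *
            (V (Idx k) l * (rowNorm V (Idx k))⁻¹)
          = (rowNorm M1 i)⁻¹ * (Pi i k * (Real.sqrt (deg (Idx k) + τ) * V (Idx k) l)) *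
            (rowNorm V (Idx k) * (rowNorm V (Idx k))⁻¹) from by ring,
        mul_inv_cancel₀ hc, mul_one]
    rw [hcalc, hVstar i l]
    ring
  · intro i j hij
    have hMrow : M1 i = M1 j := funext fun l => by
      rw [hMentry, hMentry]
      exact Finset.sum_congr rfl fun k _ => by rw [congrFun hij k]
    have hnr : rowNorm M1 i = rowNorm M1 j := by unfold rowNorm; rw [hMrow]
    funext l
    rw [hVstar i l, hVstar j l, hMrow, hnr]
end

section
/- Under the MMSB setup, the n×n matrix V_{τ,2} = 𝒟_τ^{1/2} V V' satisfies V_{τ,2} = Π · V_{τ,2}(𝓘,:), where V_{τ,2}(𝓘,:) ∈ ℝ^{K×n} is the submatrix of rows of V_{τ,2} indexed by 𝓘. Moreover, for any two nodes i and j with Π(i,:) = Π(j,:), one has V_{τ,2}(i,:) = V_{τ,2}(j,:). -/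
open Matrix BigOperators

/-- Lemma 4.2: `V_{τ,2} = 𝒟_τ^{1/2} V V'` satisfies
`V_{τ,2} = Π V_{τ,2}(𝓘,:)`, and equal membership rows give equal rows of `V_{τ,2}`. -/
theorem stmt_4
    {n K : ℕ} (hn : 0 < n) (hK : 0 < K) (hKn : K ≤ n)
    (Pi : Matrix (Fin n) (Fin K) ℝ)
    (hPi_nonneg : ∀ i k, 0 ≤ Pi i k)
    (hPi_rowsum : ∀ i, ∑ k, Pi i k = 1)
    (hPi_rank : Pi.rank = K)
    (hpure : ∀ k : Fin K, ∃ i : Fin n, ∀ l, Pi i l = if l = k then 1 else 0)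
    (Pt : Matrix (Fin K) (Fin K) ℝ)
    (hPt_symm : Pt.IsSymm)
    (hPt_nonneg : ∀ k l, 0 ≤ Pt k l)
    (hPt_rank : Pt.rank = K)
    (hPt_le_one : ∀ k l, Pt k l ≤ 1)
    (hPt_max : ∃ k l, Pt k l = 1)
    (ρ τ : ℝ) (hρ0 : 0 < ρ) (hρ1 : ρ ≤ 1) (hτ : 0 ≤ τ)
    (Om : Matrix (Fin n) (Fin n) ℝ) (hOm : Om = Pi * (ρ • Pt) * Piᵀ)
    (deg : Fin n → ℝ) (hdeg : ∀ i, deg i = ∑ j, Om i j)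
    (hpos : ∀ i, 0 < deg i + τ)
    (Ltau : Matrix (Fin n) (Fin n) ℝ)
    (hLtau : Ltau = Matrix.diagonal (fun i => (Real.sqrt (deg i + τ))⁻¹) * Om *
      Matrix.diagonal (fun i => (Real.sqrt (deg i + τ))⁻¹))
    (Idx : Fin K → Fin n) (hIdx : Pi.submatrix Idx id = 1)
    (V : Matrix (Fin n) (Fin K) ℝ) (e : Fin K → ℝ)
    (hVorth : Vᵀ * V = 1) (he : ∀ k, e k ≠ 0)
    (hVE : Ltau = V * Matrix.diagonal e * Vᵀ)
    (Vtau2 : Matrix (Fin n) (Fin n) ℝ)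
    (hVtau2 : Vtau2 = Matrix.diagonal (fun i => Real.sqrt (deg i + τ)) * (V * Vᵀ)) :
    Vtau2 = Pi * Vtau2.submatrix Idx id ∧
    ∀ i j : Fin n, Pi i = Pi j → Vtau2 i = Vtau2 j := by
  -- abbreviations
  have hD : Matrix.diagonal (fun i => Real.sqrt (deg i + τ)) *
      Matrix.diagonal (fun i => (Real.sqrt (deg i + τ))⁻¹) = (1 : Matrix (Fin n) (Fin n) ℝ) := by
    rw [Matrix.diagonal_mul_diagonal]
    have : (fun i => Real.sqrt (deg i + τ) * (Real.sqrt (deg i + τ))⁻¹) =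
        fun _ : Fin n => (1 : ℝ) := by
      funext i
      exact mul_inv_cancel₀ (ne_of_gt (Real.sqrt_pos.mpr (hpos i)))
    rw [this, Matrix.diagonal_one]
  have hE : Matrix.diagonal e * Matrix.diagonal (fun k => (e k)⁻¹) =
      (1 : Matrix (Fin K) (Fin K) ℝ) := by
    rw [Matrix.diagonal_mul_diagonal]
    have : (fun k => e k * (e k)⁻¹) = fun _ : Fin K => (1 : ℝ) := by
      funext k; exact mul_inv_cancel₀ (he k)
    rw [this, Matrix.diagonal_one]
  have hLV : Ltau * V = V * Matrix.diagonal e := by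
    rw [hVE, Matrix.mul_assoc, hVorth, Matrix.mul_one]
  have hVeq : V = Ltau * V * Matrix.diagonal (fun k => (e k)⁻¹) := by
    rw [hLV, Matrix.mul_assoc, hE, Matrix.mul_one]
  have key : ∃ B : Matrix (Fin K) (Fin n) ℝ, Vtau2 = Pi * B := by
    refine ⟨(ρ • Pt) * (Piᵀ * (Matrix.diagonal (fun i => (Real.sqrt (deg i + τ))⁻¹) *
      (V * (Matrix.diagonal (fun k => (e k)⁻¹) * Vᵀ)))), ?_⟩
    rw [hVtau2]
    nth_rewrite 1 [hVeq]
    rw [hLtau, hOm]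
    simp only [Matrix.mul_assoc]
    rw [← Matrix.mul_assoc (Matrix.diagonal (fun i => Real.sqrt (deg i + τ))), hD,
      Matrix.one_mul]
  obtain ⟨B, hB⟩ := key
  have hsub : Vtau2.submatrix Idx id = B := by
    rw [hB]
    have : (Pi * B).submatrix Idx id = Pi.submatrix Idx id * B := by
      ext i j
      simp [Matrix.mul_apply]
    rw [this, hIdx, Matrix.one_mul]
  constructor
  · rw [hsub, ← hB]
  · intro i j hij
    funext c
    rw [hB]
    simp only [Matrix.mul_apply]
    rw [show Pi i = Pi j from hij]
end

section
/- Under the MMSB setup, with V_2 = V V': (i) ‖V_2(i,:)‖ = ‖V(i,:)‖ for every i, so N_{V_2} = N_V; (ii) V_{*,2}(𝓘,:) V_{*,2}(𝓘,:)' = V_{*,1}(𝓘,:) V_{*,1}(𝓘,:)'; and (iii) Z_{*,2} := V_2 V_{*,2}(𝓘,:)' (V_{*,2}(𝓘,:) V_{*,2}(𝓘,:)')^{-1} N_{V_2}(𝓘,𝓘) 𝒟_τ^{-1/2}(𝓘,𝓘) equals Z_{*,1} := V · V_{*,1}(𝓘,:)^{-1} N_V(𝓘,𝓘) 𝒟_τ^{-1/2}(𝓘,𝓘).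 -/
open Matrix BigOperators

/-- part of Lemma 4.6: with `V₂ = V V'`:
(i) `‖V₂(i,:)‖ = ‖V(i,:)‖` for every `i`, so `N_{V₂} = N_V`;
(ii) `V_{*,2}(𝓘,:) V_{*,2}(𝓘,:)' = V_{*,1}(𝓘,:) V_{*,1}(𝓘,:)'`;
(iii) `Z_{*,2} := V₂ V_{*,2}(𝓘,:)' (V_{*,2}(𝓘,:) V_{*,2}(𝓘,:)')⁻¹ N_{V₂}(𝓘,𝓘) 𝒟_τ^{-1/2}(𝓘,𝓘)`
equals `Z_{*,1} := V V_{*,1}(𝓘,:)⁻¹ N_V(𝓘,𝓘) 𝒟_τ^{-1/2}(𝓘,𝓘)`. -/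
theorem stmt_7
    {n K : ℕ} (hn : 0 < n) (hK : 0 < K) (hKn : K ≤ n)
    (Pi : Matrix (Fin n) (Fin K) ℝ)
    (hPi_nonneg : ∀ i k, 0 ≤ Pi i k)
    (hPi_rowsum : ∀ i, ∑ k, Pi i k = 1)
    (hPi_rank : Pi.rank = K)
    (hpure : ∀ k : Fin K, ∃ i : Fin n, ∀ l, Pi i l = if l = k then 1 else 0)
    (Pt : Matrix (Fin K) (Fin K) ℝ)
    (hPt_symm : Pt.IsSymm)
    (hPt_nonneg : ∀ k l, 0 ≤ Pt k l)
    (hPt_rank : Pt.rank = K)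
    (hPt_le_one : ∀ k l, Pt k l ≤ 1)
    (hPt_max : ∃ k l, Pt k l = 1)
    (ρ τ : ℝ) (hρ0 : 0 < ρ) (hρ1 : ρ ≤ 1) (hτ : 0 ≤ τ)
    (Om : Matrix (Fin n) (Fin n) ℝ) (hOm : Om = Pi * (ρ • Pt) * Piᵀ)
    (deg : Fin n → ℝ) (hdeg : ∀ i, deg i = ∑ j, Om i j)
    (hpos : ∀ i, 0 < deg i + τ)
    (Ltau : Matrix (Fin n) (Fin n) ℝ)
    (hLtau : Ltau = Matrix.diagonal (fun i => (Real.sqrt (deg i + τ))⁻¹) * Om *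
      Matrix.diagonal (fun i => (Real.sqrt (deg i + τ))⁻¹))
    (Idx : Fin K → Fin n) (hIdx : Pi.submatrix Idx id = 1)
    (V : Matrix (Fin n) (Fin K) ℝ) (e : Fin K → ℝ)
    (hVorth : Vᵀ * V = 1) (he : ∀ k, e k ≠ 0)
    (hVE : Ltau = V * Matrix.diagonal e * Vᵀ)
    (hVrow : ∀ i, V i ≠ 0)
    (Vstar1 : Matrix (Fin n) (Fin K) ℝ)
    (hVstar1 : ∀ i k, Vstar1 i k = V i k / rowNorm V i)
    (hVstar1unit : IsUnit (Vstar1.submatrix Idx id))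
    (V2 : Matrix (Fin n) (Fin n) ℝ) (hV2 : V2 = V * Vᵀ)
    (Vstar2 : Matrix (Fin n) (Fin n) ℝ)
    (hVstar2 : ∀ i j, Vstar2 i j = V2 i j / rowNorm V2 i) :
    (∀ i, rowNorm V2 i = rowNorm V i) ∧
    (Matrix.diagonal (fun i => (rowNorm V2 i)⁻¹) =
      Matrix.diagonal (fun i => (rowNorm V i)⁻¹)) ∧
    (Vstar2.submatrix Idx id) * (Vstar2.submatrix Idx id)ᵀ =
      (Vstar1.submatrix Idx id) * (Vstar1.submatrix Idx id)ᵀ ∧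
    V2 * (Vstar2.submatrix Idx id)ᵀ *
        ((Vstar2.submatrix Idx id) * (Vstar2.submatrix Idx id)ᵀ)⁻¹ *
        Matrix.diagonal (fun k => (rowNorm V2 (Idx k))⁻¹) *
        Matrix.diagonal (fun k => (Real.sqrt (deg (Idx k) + τ))⁻¹) =
      V * (Vstar1.submatrix Idx id)⁻¹ *
        Matrix.diagonal (fun k => (rowNorm V (Idx k))⁻¹) *
        Matrix.diagonal (fun k => (Real.sqrt (deg (Idx k) + τ))⁻¹) := by
  -- V2 is symmetric and idempotent
  have hV2symm : V2ᵀ = V2 := by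
    rw [hV2, Matrix.transpose_mul, Matrix.transpose_transpose]
  have hV2idem : V2 * V2 = V2 := by
    rw [hV2]
    calc V * Vᵀ * (V * Vᵀ) = V * (Vᵀ * V) * Vᵀ := by
          rw [Matrix.mul_assoc, Matrix.mul_assoc, Matrix.mul_assoc]
      _ = V * Vᵀ := by rw [hVorth, Matrix.mul_one]
  -- (i)
  have hrn : ∀ i, rowNorm V2 i = rowNorm V i := by
    intro i
    unfold rowNorm
    congr 1
    have h1 : ∑ j, (V2 i j) ^ 2 = (V2 * V2) i i := by
      rw [Matrix.mul_apply]
      apply Finset.sum_congr rfl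
      intro j _
      have : V2 j i = V2 i j := congrFun (congrFun hV2symm i) j
      rw [this]; ring
    have h2 : (V2 * V2) i i = V2 i i := by rw [hV2idem]
    have h3 : V2 i i = ∑ k, (V i k) ^ 2 := by
      rw [hV2, Matrix.mul_apply]
      apply Finset.sum_congr rfl
      intro k _
      simp [Matrix.transpose_apply]; ring
    rw [h1, h2, h3]
  refine ⟨hrn, by simp [hrn], ?_⟩
  -- structural fact: Vstar2 = Vstar1 * Vᵀ
  have hfac : Vstar2 = Vstar1 * Vᵀ := by
    ext i j
    rw [hVstar2, Matrix.mul_apply, hrn, hV2, Matrix.mul_apply, Finset.sum_div]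
    apply Finset.sum_congr rfl
    intro k _
    rw [hVstar1]
    simp [Matrix.transpose_apply]
    ring
  have hW2 : Vstar2.submatrix Idx id = (Vstar1.submatrix Idx id) * Vᵀ := by
    ext k j
    rw [hfac]
    simp [Matrix.submatrix_apply, Matrix.mul_apply]
  have hWW : (Vstar2.submatrix Idx id) * (Vstar2.submatrix Idx id)ᵀ = (Vstar1.submatrix Idx id) * (Vstar1.submatrix Idx id)ᵀ := by
    rw [hW2, Matrix.transpose_mul, Matrix.transpose_transpose]
    calc (Vstar1.submatrix Idx id) * Vᵀ * (V * (Vstar1.submatrix Idx id)ᵀ) = (Vstar1.submatrix Idx id) * (Vᵀ * V) * (Vstar1.submatrix Idx id)ᵀ := by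
          rw [Matrix.mul_assoc, Matrix.mul_assoc, Matrix.mul_assoc]
      _ = (Vstar1.submatrix Idx id) * (Vstar1.submatrix Idx id)ᵀ := by rw [hVorth, Matrix.mul_one]
  refine ⟨hWW, ?_⟩
  have hdet : IsUnit (Vstar1.submatrix Idx id).det := (Matrix.isUnit_iff_isUnit_det _).mp hVstar1unit
  have hdetT : IsUnit (Vstar1.submatrix Idx id)ᵀ.det := by rwa [Matrix.det_transpose]
  -- Wᵀ * ((Vstar1.submatrix Idx id) * (Vstar1.submatrix Idx id)ᵀ)⁻¹ = W⁻¹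
  have hkey : (Vstar1.submatrix Idx id)ᵀ * ((Vstar1.submatrix Idx id) * (Vstar1.submatrix Idx id)ᵀ)⁻¹ = (Vstar1.submatrix Idx id)⁻¹ := by
    rw [Matrix.mul_inv_rev, ← Matrix.mul_assoc,
      Matrix.mul_nonsing_inv _ hdetT, Matrix.one_mul]
  have hV2W2 : V2 * (Vstar2.submatrix Idx id)ᵀ = V * (Vstar1.submatrix Idx id)ᵀ := by
    rw [hW2, Matrix.transpose_mul, Matrix.transpose_transpose, hV2]
    calc V * Vᵀ * (V * (Vstar1.submatrix Idx id)ᵀ) = V * (Vᵀ * V) * (Vstar1.submatrix Idx id)ᵀ := by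
          rw [Matrix.mul_assoc, Matrix.mul_assoc, Matrix.mul_assoc]
      _ = V * (Vstar1.submatrix Idx id)ᵀ := by rw [hVorth, Matrix.mul_one]
  rw [hV2W2, hWW, Matrix.mul_assoc V _ _, hkey]
  congr 2
  ext k k'
  simp [hrn]
end

section
/- Under the MMSB setup, let Y_1 = N_{M_1} Π 𝒟_τ^{1/2}(𝓘,𝓘) N_V^{-1}(𝓘,𝓘) (so V_{*,1} = Y_1 V_{*,1}(𝓘,:)), and for each node i set r_1(i) = Y_1(i,:)𝟏 and Φ_1(i,:) = Y_1(i,:)/r_1(i). Then for every i: V_{*,1}(i,:) = r_1(i) · Φ_1(i,:) · V_{*,1}(𝓘,:) and r_1(i) ≥ 1; if node i is pure with Π(i,k) = 1 then r_1(i) = 1 and Φ_1(i,:) = e_k'; and if node i is mixed (Π(i,k) < 1 for all k) then r_1(i) > 1. -/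
open Matrix BigOperators

noncomputable def toE (K : ℕ) : (Fin K → ℝ) ≃ₗ[ℝ] EuclideanSpace ℝ (Fin K) :=
  (WithLp.linearEquiv 2 ℝ (Fin K → ℝ)).symm

lemma toE_apply {K : ℕ} (f : Fin K → ℝ) (l : Fin K) : toE K f l = f l := rfl

lemma rowNorm_eq_norm {m k : ℕ} (M : Matrix (Fin m) (Fin k) ℝ) (i : Fin m) :
    rowNorm M i = ‖toE k (M i)‖ := by
  rw [rowNorm, EuclideanSpace.norm_eq]
  refine congrArg _ (Finset.sum_congr rfl fun j _ => ?_)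
  rw [show (toE k (M i)) j = M i j from rfl, Real.norm_eq_abs, sq_abs]

lemma strict_tri {K : ℕ} (c : Fin K → ℝ) (w : Fin K → EuclideanSpace ℝ (Fin K))
    (hc : ∀ k, 0 ≤ c k)
    (k1 k2 : Fin K) (hne : k1 ≠ k2) (h1 : 0 < c k1) (h2 : 0 < c k2)
    (hw1 : w k1 ≠ 0) (hw2 : w k2 ≠ 0)
    (hray : ∀ a b : ℝ, 0 < a → 0 < b → a • w k1 ≠ b • w k2) :
    ‖∑ k, c k • w k‖ < ∑ k, c k * ‖w k‖ := by
  have hnorm : ∀ k, ‖c k • w k‖ = c k * ‖w k‖ := fun k => by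
    rw [norm_smul, Real.norm_eq_abs, abs_of_nonneg (hc k)]
  have hmem1 : k1 ∈ (Finset.univ : Finset (Fin K)) := Finset.mem_univ _
  have hmem2 : k2 ∈ Finset.univ.erase k1 := Finset.mem_erase.mpr ⟨hne.symm, Finset.mem_univ _⟩
  have hsplitE : ∑ k, c k • w k
      = c k1 • w k1 + (c k2 • w k2 + ∑ k ∈ (Finset.univ.erase k1).erase k2, c k • w k) := by
    rw [← Finset.add_sum_erase _ _ hmem1, ← Finset.add_sum_erase _ _ hmem2]
  have hsplitR : ∑ k, c k * ‖w k‖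
      = c k1 * ‖w k1‖ + (c k2 * ‖w k2‖ + ∑ k ∈ (Finset.univ.erase k1).erase k2, c k * ‖w k‖) := by
    rw [← Finset.add_sum_erase _ _ hmem1, ← Finset.add_sum_erase _ _ hmem2]
  have key : ‖c k1 • w k1 + c k2 • w k2‖ < c k1 * ‖w k1‖ + c k2 * ‖w k2‖ := by
    rcases lt_or_eq_of_le (norm_add_le (c k1 • w k1) (c k2 • w k2)) with h | h
    · rw [hnorm, hnorm] at h; exact h
    · exfalso
      have hsr : SameRay ℝ (c k1 • w k1) (c k2 • w k2) := sameRay_iff_norm_add.mpr h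
      obtain ⟨r, s, hr, hs, hrs⟩ := hsr.exists_pos (smul_ne_zero h1.ne' hw1) (smul_ne_zero h2.ne' hw2)
      rw [smul_smul, smul_smul] at hrs
      exact hray _ _ (mul_pos hr h1) (mul_pos hs h2) hrs
  calc ‖∑ k, c k • w k‖
      = ‖(c k1 • w k1 + c k2 • w k2) + ∑ k ∈ (Finset.univ.erase k1).erase k2, c k • w k‖ := by
        rw [hsplitE, add_assoc]
    _ ≤ ‖c k1 • w k1 + c k2 • w k2‖ + ‖∑ k ∈ (Finset.univ.erase k1).erase k2, c k • w k‖ :=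
        norm_add_le _ _
    _ ≤ ‖c k1 • w k1 + c k2 • w k2‖ + ∑ k ∈ (Finset.univ.erase k1).erase k2, c k * ‖w k‖ := by
        gcongr
        exact (norm_sum_le _ _).trans_eq (Finset.sum_congr rfl fun k _ => hnorm k)
    _ < (c k1 * ‖w k1‖ + c k2 * ‖w k2‖) + ∑ k ∈ (Finset.univ.erase k1).erase k2, c k * ‖w k‖ := by
        gcongr
    _ = ∑ k, c k * ‖w k‖ := by rw [hsplitR, add_assoc]


/-- Lemma B.1: with `Y₁` as in the ideal cone lemma, `r₁(i) = Y₁(i,:)𝟏` and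
`Φ₁(i,:) = Y₁(i,:)/r₁(i)`, each row of `V_{*,1}` is a scaled convex combination
`V_{*,1}(i,:) = r₁(i) Φ₁(i,:) V_{*,1}(𝓘,:)` with `r₁(i) ≥ 1`; pure nodes have `r₁(i) = 1` and
`Φ₁(i,:) = eₖ'`, mixed nodes have `r₁(i) > 1`. -/
theorem stmt_8
    {n K : ℕ} (hn : 0 < n) (hK : 0 < K) (hKn : K ≤ n)
    (Pi : Matrix (Fin n) (Fin K) ℝ)
    (hPi_nonneg : ∀ i k, 0 ≤ Pi i k)
    (hPi_rowsum : ∀ i, ∑ k, Pi i k = 1)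
    (hPi_rank : Pi.rank = K)
    (hpure : ∀ k : Fin K, ∃ i : Fin n, ∀ l, Pi i l = if l = k then 1 else 0)
    (Pt : Matrix (Fin K) (Fin K) ℝ)
    (hPt_symm : Pt.IsSymm)
    (hPt_nonneg : ∀ k l, 0 ≤ Pt k l)
    (hPt_rank : Pt.rank = K)
    (hPt_le_one : ∀ k l, Pt k l ≤ 1)
    (hPt_max : ∃ k l, Pt k l = 1)
    (ρ τ : ℝ) (hρ0 : 0 < ρ) (hρ1 : ρ ≤ 1) (hτ : 0 ≤ τ)
    (Om : Matrix (Fin n) (Fin n) ℝ) (hOm : Om = Pi * (ρ • Pt) * Piᵀ)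
    (deg : Fin n → ℝ) (hdeg : ∀ i, deg i = ∑ j, Om i j)
    (hpos : ∀ i, 0 < deg i + τ)
    (Ltau : Matrix (Fin n) (Fin n) ℝ)
    (hLtau : Ltau = Matrix.diagonal (fun i => (Real.sqrt (deg i + τ))⁻¹) * Om *
      Matrix.diagonal (fun i => (Real.sqrt (deg i + τ))⁻¹))
    (Idx : Fin K → Fin n) (hIdx : Pi.submatrix Idx id = 1)
    (V : Matrix (Fin n) (Fin K) ℝ) (e : Fin K → ℝ)
    (hVorth : Vᵀ * V = 1) (he : ∀ k, e k ≠ 0)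
    (hVE : Ltau = V * Matrix.diagonal e * Vᵀ)
    (hVrow : ∀ i, V i ≠ 0)
    (Vstar1 : Matrix (Fin n) (Fin K) ℝ)
    (hVstar1 : ∀ i k, Vstar1 i k = V i k / rowNorm V i)
    (M1 : Matrix (Fin n) (Fin K) ℝ)
    (hM1 : M1 = Pi * Matrix.diagonal (fun k => Real.sqrt (deg (Idx k) + τ)) *
      V.submatrix Idx id)
    (Y1 : Matrix (Fin n) (Fin K) ℝ)
    (hY1 : Y1 = Matrix.diagonal (fun i => (rowNorm M1 i)⁻¹) * Pi *
      Matrix.diagonal (fun k => Real.sqrt (deg (Idx k) + τ)) *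
      Matrix.diagonal (fun k => rowNorm V (Idx k)))
    (r1 : Fin n → ℝ) (hr1 : ∀ i, r1 i = ∑ k, Y1 i k)
    (Phi1 : Matrix (Fin n) (Fin K) ℝ) (hPhi1 : ∀ i k, Phi1 i k = Y1 i k / r1 i) :
    ∀ i : Fin n,
      (∀ l, Vstar1 i l = r1 i * ∑ k, Phi1 i k * Vstar1 (Idx k) l) ∧
      1 ≤ r1 i ∧
      (∀ k, Pi i k = 1 → r1 i = 1 ∧ ∀ l, Phi1 i l = if l = k then 1 else 0) ∧
      ((∀ k, Pi i k < 1) → 1 < r1 i) := by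
  classical
  -- abbreviations
  have hspos : ∀ i, 0 < Real.sqrt (deg i + τ) := fun i => Real.sqrt_pos.mpr (hpos i)
  -- Step A : Ltau * V = V * diag e
  have hLV : Ltau * V = V * Matrix.diagonal e := by
    rw [hVE, Matrix.mul_assoc, hVorth, Matrix.mul_one]
  rw [hLtau] at hLV
  have hdd : Matrix.diagonal (fun i => Real.sqrt (deg i + τ)) *
      Matrix.diagonal (fun i => (Real.sqrt (deg i + τ))⁻¹) = 1 := by
    rw [Matrix.diagonal_mul_diagonal,
      funext fun i => mul_inv_cancel₀ (hspos i).ne', Matrix.diagonal_one]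
  have hdd' : Matrix.diagonal (fun i => (Real.sqrt (deg i + τ))⁻¹) *
      Matrix.diagonal (fun i => Real.sqrt (deg i + τ)) = 1 := by
    rw [Matrix.diagonal_mul_diagonal,
      funext fun i => inv_mul_cancel₀ (hspos i).ne', Matrix.diagonal_one]
  have hee : Matrix.diagonal e * Matrix.diagonal (fun k => (e k)⁻¹) = 1 := by
    rw [Matrix.diagonal_mul_diagonal,
      funext fun k => mul_inv_cancel₀ (he k), Matrix.diagonal_one]
  have h3 : Matrix.diagonal (fun i => Real.sqrt (deg i + τ)) *
      (Matrix.diagonal (fun i => (Real.sqrt (deg i + τ))⁻¹) * Om *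
        Matrix.diagonal (fun i => (Real.sqrt (deg i + τ))⁻¹) * V) =
      Matrix.diagonal (fun i => Real.sqrt (deg i + τ)) * (V * Matrix.diagonal e) := by
    rw [hLV]
  simp only [← Matrix.mul_assoc] at h3
  rw [hdd, Matrix.one_mul] at h3
  -- h3 : Om * dinv * V = diag d * V * diag e
  have h4 : Om * Matrix.diagonal (fun i => (Real.sqrt (deg i + τ))⁻¹) * V *
      Matrix.diagonal (fun k => (e k)⁻¹) =
      Matrix.diagonal (fun i => Real.sqrt (deg i + τ)) * V * Matrix.diagonal e *
      Matrix.diagonal (fun k => (e k)⁻¹) := by rw [h3]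
  rw [Matrix.mul_assoc (Matrix.diagonal (fun i => Real.sqrt (deg i + τ)) * V), hee,
    Matrix.mul_one] at h4
  -- the K×K matrix C
  set C : Matrix (Fin K) (Fin K) ℝ :=
    (ρ • Pt) * Piᵀ * Matrix.diagonal (fun i => (Real.sqrt (deg i + τ))⁻¹) * V *
      Matrix.diagonal (fun k => (e k)⁻¹) with hC
  have hPiC : Pi * C = Matrix.diagonal (fun i => Real.sqrt (deg i + τ)) * V := by
    rw [hC, ← h4, hOm]
    simp only [Matrix.mul_assoc]
  have hPiI : ∀ (k : Fin K) (m : Fin K), Pi (Idx k) m = if k = m then 1 else 0 := by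
    intro k m
    have h := congrFun (congrFun hIdx k) m
    simpa [Matrix.submatrix_apply, Matrix.one_apply] using h
  have hCe : ∀ k l, C k l = Real.sqrt (deg (Idx k) + τ) * V (Idx k) l := by
    intro k l
    have h5 := congrFun (congrFun hPiC (Idx k)) l
    rw [Matrix.mul_apply, Matrix.diagonal_mul] at h5
    rw [← h5]
    rw [Finset.sum_congr rfl (fun m _ => by rw [hPiI k m])]
    simp
  -- M1 entrywise
  have hM1e : ∀ i l, M1 i l = ∑ k, Pi i k * (Real.sqrt (deg (Idx k) + τ) * V (Idx k) l) := by
    intro i l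
    rw [hM1, Matrix.mul_apply]
    refine Finset.sum_congr rfl fun k _ => ?_
    rw [Matrix.mul_diagonal, Matrix.submatrix_apply, id_eq, mul_assoc]
  have hCmat : C = Matrix.diagonal (fun k => Real.sqrt (deg (Idx k) + τ)) *
      V.submatrix Idx id := by
    ext k l
    rw [hCe, Matrix.diagonal_mul, Matrix.submatrix_apply, id_eq]
  have hM1key : ∀ i l, M1 i l = Real.sqrt (deg i + τ) * V i l := by
    intro i l
    have : M1 = Matrix.diagonal (fun i => Real.sqrt (deg i + τ)) * V := by
      rw [hM1, Matrix.mul_assoc, ← hCmat, hPiC]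
    rw [this, Matrix.diagonal_mul]
  -- row norms
  have hVpos : ∀ i, 0 < rowNorm V i := by
    intro i
    rw [rowNorm]
    apply Real.sqrt_pos.mpr
    obtain ⟨l, hl⟩ := Function.ne_iff.mp (hVrow i)
    exact Finset.sum_pos' (fun j _ => sq_nonneg _) ⟨l, Finset.mem_univ l, pow_two_pos_of_ne_zero hl⟩
  have hM1norm : ∀ i, rowNorm M1 i = Real.sqrt (deg i + τ) * rowNorm V i := by
    intro i
    rw [rowNorm, rowNorm]
    rw [Finset.sum_congr rfl (fun j _ => by
      rw [hM1key i j, mul_pow, Real.sq_sqrt (hpos i).le]), ← Finset.mul_sum,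
      Real.sqrt_mul (hpos i).le]
  have hM1pos : ∀ i, 0 < rowNorm M1 i := fun i => by
    rw [hM1norm]; exact mul_pos (hspos i) (hVpos i)
  -- vectors w
  set w : Fin K → EuclideanSpace ℝ (Fin K) :=
    fun k => toE K (fun l => Real.sqrt (deg (Idx k) + τ) * V (Idx k) l) with hw
  have hwnorm : ∀ k, ‖w k‖ = Real.sqrt (deg (Idx k) + τ) * rowNorm V (Idx k) := by
    intro k
    have : w k = Real.sqrt (deg (Idx k) + τ) • toE K (V (Idx k)) := by
      rw [← _root_.map_smul]
      rfl
    rw [this, norm_smul, Real.norm_eq_abs, abs_of_pos (hspos (Idx k)), ← rowNorm_eq_norm]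
  have hM1vec : ∀ i, toE K (M1 i) = ∑ k, Pi i k • w k := by
    intro i
    have hfe : M1 i = ∑ k, Pi i k • (fun l => Real.sqrt (deg (Idx k) + τ) * V (Idx k) l) := by
      funext l
      rw [hM1e]
      rw [Finset.sum_apply]
      rfl
    rw [hfe, map_sum]
    refine Finset.sum_congr rfl fun k _ => ?_
    rw [_root_.map_smul]
  have htri : ∀ i, rowNorm M1 i ≤ ∑ k, Pi i k * ‖w k‖ := by
    intro i
    rw [rowNorm_eq_norm, hM1vec i]
    refine (norm_sum_le _ _).trans_eq (Finset.sum_congr rfl fun k _ => ?_)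
    rw [norm_smul, Real.norm_eq_abs, abs_of_nonneg (hPi_nonneg i k)]
  -- r1 formula
  have hY1e : ∀ i k, Y1 i k = (rowNorm M1 i)⁻¹ *
      (Pi i k * (Real.sqrt (deg (Idx k) + τ) * rowNorm V (Idx k))) := by
    intro i k
    rw [hY1]
    rw [Matrix.mul_diagonal, Matrix.mul_diagonal, Matrix.diagonal_mul]
    ring
  have hr1e : ∀ i, r1 i = (rowNorm M1 i)⁻¹ * ∑ k, Pi i k * ‖w k‖ := by
    intro i
    rw [hr1, Finset.mul_sum]
    refine Finset.sum_congr rfl fun k _ => ?_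
    rw [hY1e, hwnorm]
  have hr1ge : ∀ i, 1 ≤ r1 i := by
    intro i
    rw [hr1e, inv_mul_eq_div, le_div_iff₀ (hM1pos i), one_mul]
    exact htri i
  -- main conclusion
  intro i
  have hr1ne : r1 i ≠ 0 := by linarith [hr1ge i]
  have keyrep : ∀ l, (∑ k, Y1 i k * Vstar1 (Idx k) l) = Vstar1 i l := by
    intro l
    have hterm : ∀ k, Y1 i k * Vstar1 (Idx k) l =
        (rowNorm M1 i)⁻¹ * (Pi i k * (Real.sqrt (deg (Idx k) + τ) * V (Idx k) l)) := by
      intro k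
      rw [hY1e, hVstar1]
      rw [show (rowNorm M1 i)⁻¹ * (Pi i k * (Real.sqrt (deg (Idx k) + τ) * rowNorm V (Idx k))) *
          (V (Idx k) l / rowNorm V (Idx k)) =
          (rowNorm M1 i)⁻¹ * (Pi i k * (Real.sqrt (deg (Idx k) + τ) * V (Idx k) l)) *
          (rowNorm V (Idx k) / rowNorm V (Idx k)) from by ring,
        div_self (hVpos (Idx k)).ne', mul_one]
    rw [Finset.sum_congr rfl (fun k _ => hterm k), ← Finset.mul_sum, ← hM1e, hM1key, hM1norm,
      hVstar1]
    have h1 := (hVpos i).ne'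
    have h2 := (hspos i).ne'
    field_simp
  refine ⟨?_, hr1ge i, ?_, ?_⟩
  · -- part (a)
    intro l
    rw [← keyrep l, Finset.mul_sum]
    refine Finset.sum_congr rfl fun k _ => ?_
    rw [hPhi1]
    field_simp
  · -- pure nodes
    intro k hk
    have hzero : ∀ l, l ≠ k → Pi i l = 0 := by
      intro l hl
      have hsum := hPi_rowsum i
      rw [← Finset.add_sum_erase _ _ (Finset.mem_univ k), hk] at hsum
      have h0 : ∑ m ∈ Finset.univ.erase k, Pi i m = 0 := by linarith
      have := (Finset.sum_eq_zero_iff_of_nonneg (fun m _ => hPi_nonneg i m)).mp h0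
      exact this l (Finset.mem_erase.mpr ⟨hl, Finset.mem_univ l⟩)
    have hM1i : ∀ j, M1 i j = Real.sqrt (deg (Idx k) + τ) * V (Idx k) j := by
      intro j
      rw [hM1e, Finset.sum_eq_single k
        (fun l _ hl => by rw [hzero l hl, zero_mul])
        (fun h => absurd (Finset.mem_univ k) h), hk, one_mul]
    have hnormM : rowNorm M1 i = Real.sqrt (deg (Idx k) + τ) * rowNorm V (Idx k) := by
      rw [rowNorm, rowNorm]
      rw [Finset.sum_congr rfl (fun j _ => by
        rw [hM1i j, mul_pow, Real.sq_sqrt (hpos (Idx k)).le]), ← Finset.mul_sum,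
        Real.sqrt_mul (hpos (Idx k)).le]
    have hY1i : ∀ l, Y1 i l = if l = k then 1 else 0 := by
      intro l
      by_cases h : l = k
      · subst h
        rw [hY1e, hk, hnormM, one_mul, if_pos rfl]
        exact inv_mul_cancel₀ (mul_pos (hspos (Idx l)) (hVpos (Idx l))).ne'
      · rw [hY1e, hzero l h, if_neg h]
        ring
    have hr1one : r1 i = 1 := by
      rw [hr1, Finset.sum_congr rfl (fun l _ => hY1i l)]
      simp
    refine ⟨hr1one, fun l => ?_⟩
    rw [hPhi1, hr1one, div_one, hY1i]
  · -- mixed nodes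
    intro hmix
    obtain ⟨kA, hkA⟩ : ∃ kA, 0 < Pi i kA := by
      by_contra hcon
      push_neg at hcon
      have : ∀ k ∈ Finset.univ, Pi i k = 0 := fun k _ => le_antisymm (hcon k) (hPi_nonneg i k)
      have := hPi_rowsum i
      rw [Finset.sum_eq_zero ‹∀ k ∈ Finset.univ, Pi i k = 0›] at this
      norm_num at this
    obtain ⟨kB, hkBne, hkB⟩ : ∃ kB, kB ≠ kA ∧ 0 < Pi i kB := by
      by_contra hcon
      push_neg at hcon
      have hz : ∀ l ∈ Finset.univ, l ≠ kA → Pi i l = 0 := fun l _ hl =>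
        le_antisymm (hcon l hl) (hPi_nonneg i l)
      have hsum := hPi_rowsum i
      rw [Finset.sum_eq_single kA (fun l hl hlk => hz l hl hlk)
        (fun h => absurd (Finset.mem_univ kA) h)] at hsum
      exact absurd hsum (hmix kA).ne
    have hwne : ∀ k, w k ≠ 0 := by
      intro k hcontra
      apply hVrow (Idx k)
      funext l
      have h0 : (fun l => Real.sqrt (deg (Idx k) + τ) * V (Idx k) l) = (0 : Fin K → ℝ) := by
        apply (toE K).injective
        rw [map_zero]
        exact hcontra
      have := congrFun h0 l
      simp only [_root_.Pi.zero_apply] at this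
      exact (mul_eq_zero.mp this).resolve_left (hspos (Idx k)).ne'
    -- invertibility of C
    have hLC : (Vᵀ * Matrix.diagonal (fun i => (Real.sqrt (deg i + τ))⁻¹) * Pi) * C = 1 := by
      rw [Matrix.mul_assoc (Vᵀ * Matrix.diagonal fun i => (Real.sqrt (deg i + τ))⁻¹), hPiC]
      rw [Matrix.mul_assoc Vᵀ, ← Matrix.mul_assoc (Matrix.diagonal fun i =>
        (Real.sqrt (deg i + τ))⁻¹), hdd', Matrix.one_mul, hVorth]
    have hCL : C * (Vᵀ * Matrix.diagonal (fun i => (Real.sqrt (deg i + τ))⁻¹) * Pi) = 1 :=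
      mul_eq_one_comm.mp hLC
    have hray : ∀ a b : ℝ, 0 < a → 0 < b → a • w kA ≠ b • w kB := by
      intro a b ha hb hab
      have h0 : a • (fun l => Real.sqrt (deg (Idx kA) + τ) * V (Idx kA) l)
          = b • (fun l => Real.sqrt (deg (Idx kB) + τ) * V (Idx kB) l) := by
        apply (toE K).injective
        rw [_root_.map_smul, _root_.map_smul]
        exact hab
      have habC : ∀ l, a * C kA l = b * C kB l := by
        intro l
        have h1 := congrFun h0 l
        simp only [_root_.Pi.smul_apply, smul_eq_mul] at h1
        rw [hCe, hCe]
        exact h1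
      set x : Fin K → ℝ := fun k => if k = kA then a else if k = kB then -b else 0 with hx
      have hxC : x ᵥ* C = 0 := by
        funext l
        have hv : (x ᵥ* C) l = ∑ k, x k * C k l := by
          simp [Matrix.vecMul, dotProduct]
        have h1 : x kA = a := by simp [hx]
        have h2 : x kB = -b := by simp [hx, hkBne]
        have hrw : (x ᵥ* C) l = x kA * C kA l + x kB * C kB l := by
          rw [hv]
          exact Finset.sum_eq_add kA kB hkBne.symm
            (fun c _ hc => by simp [hx, hc.1, hc.2])
            (fun h => absurd (Finset.mem_univ kA) h)
            (fun h => absurd (Finset.mem_univ kB) h)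
        rw [hrw, h1, h2]
        simp only [_root_.Pi.zero_apply]
        linarith [habC l]
      have hx0 : x = 0 := by
        have h7 := Matrix.vecMul_vecMul x C
          (Vᵀ * Matrix.diagonal (fun i => (Real.sqrt (deg i + τ))⁻¹) * Pi)
        rw [hxC, hCL, Matrix.vecMul_one, Matrix.zero_vecMul] at h7
        exact h7.symm
      have : x kA = a := by simp [hx]
      rw [hx0] at this
      simp only [_root_.Pi.zero_apply] at this
      exact ha.ne this
    have hstrict : rowNorm M1 i < ∑ k, Pi i k * ‖w k‖ := by
      rw [rowNorm_eq_norm, hM1vec i]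
      exact strict_tri (Pi i) w (hPi_nonneg i) kA kB hkBne.symm hkA hkB
        (hwne kA) (hwne kB) hray
    rw [hr1e, inv_mul_eq_div, lt_div_iff₀ (hM1pos i), one_mul]
    exact hstrict
end

section
/- Under the MMSB setup, for every node i (1 ≤ i ≤ n), √((τ+δ_min)/(τ+δ_max)) · 1/√(K λ_1(Π'Π)) ≤ ‖V(i,:)‖ ≤ √((τ+δ_max)/(τ+δ_min)) · 1/√(λ_K(Π'Π)). -/
/-
Put `Y = 𝒟_τ^{-1/2} Π`, so that `𝓛_τ = Y (ρP̃) Yᵀ`. As `E` is invertible, `V = 𝓛_τ V E⁻¹ = Y B`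
for a square `B`, and `VᵀV = I` becomes `B Bᵀ (YᵀY) = I`; in particular `Y`, hence `Π`, is
injective, so `Π'Π` is positive definite. Thus `‖V(i,:)‖² = Y(i,:) (YᵀY)⁻¹ Y(i,:)ᵀ`.
In the Loewner order `YᵀY = Πᵀ 𝒟_τ⁻¹ Π` lies between `λ_K(Π'Π)/(τ+δ_max)` and
`λ_1(Π'Π)/(τ+δ_min)` times the identity, so `(YᵀY)⁻¹` lies between the reciprocals, while
`‖Y(i,:)‖² = ‖Π(i,:)‖² / (τ + 𝒟(i,i))` with `1/K ≤ ‖Π(i,:)‖² ≤ 1` since `Π(i,:)` is a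
probability vector.
-/

open Matrix BigOperators

open scoped MatrixOrder

namespace Matrix

variable {m ι : Type*}

lemma dotProduct_mulVec_mono [Fintype ι] {A B : Matrix ι ι ℝ} (h : A ≤ B) (x : ι → ℝ) :
    x ⬝ᵥ (A *ᵥ x) ≤ x ⬝ᵥ (B *ᵥ x) := by
  simpa [sub_mulVec, dotProduct_sub] using (le_iff.mp h).dotProduct_mulVec_nonneg x

lemma dotProduct_smul_one_mulVec [Fintype ι] [DecidableEq ι] (c : ℝ) (x : ι → ℝ) :
    x ⬝ᵥ ((c • 1 : Matrix ι ι ℝ) *ᵥ x) = c * (x ⬝ᵥ x) := by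
  rw [smul_mulVec, one_mulVec, dotProduct_smul, smul_eq_mul]

lemma smul_le_smul_of_nonneg {A B : Matrix ι ι ℝ} (h : A ≤ B) {c : ℝ} (hc : 0 ≤ c) :
    c • A ≤ c • B := by
  rw [le_iff, ← smul_sub]
  exact (le_iff.mp h).smul hc

lemma transpose_mul_diagonal_mul_mono [Fintype m] [Fintype ι] [DecidableEq m]
    (A : Matrix m ι ℝ) {w w' : m → ℝ} (h : w ≤ w') :
    Aᵀ * diagonal w * A ≤ Aᵀ * diagonal w' * A := by
  have hD : (diagonal (w' - w)).PosSemidef :=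
    posSemidef_diagonal_iff.mpr fun j => sub_nonneg.mpr (h j)
  rw [le_iff, ← Matrix.sub_mul, ← Matrix.mul_sub, diagonal_sub,
    ← conjTranspose_eq_transpose_of_trivial]
  exact hD.conjTranspose_mul_mul_same A

lemma smul_transpose_mul_self [Fintype m] [Fintype ι] [DecidableEq m] (A : Matrix m ι ℝ)
    (c : ℝ) :
    c • (Aᵀ * A) = Aᵀ * (diagonal fun _ => c : Matrix m m ℝ) * A := by
  rw [← smul_one_eq_diagonal, Matrix.mul_smul, Matrix.mul_one, Matrix.smul_mul]

lemma isHermitian_transpose_mul_self [Fintype m] (A : Matrix m ι ℝ) :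
    (Aᵀ * A).IsHermitian := by
  simpa only [conjTranspose_eq_transpose_of_trivial] using isHermitian_conjTranspose_mul_self A

lemma spectrum_nonsing_inv [Fintype ι] [DecidableEq ι] {A : Matrix ι ι ℝ} (hA : IsUnit A) :
    spectrum ℝ A⁻¹ = (spectrum ℝ A)⁻¹ := by
  obtain ⟨u, rfl⟩ := hA
  rw [← coe_units_inv, spectrum.map_inv]

namespace IsHermitian

variable [Fintype ι] [DecidableEq ι] {A : Matrix ι ι ℝ}

lemma smul_one_le_iff (hA : A.IsHermitian) {c : ℝ} :
    c • (1 : Matrix ι ι ℝ) ≤ A ↔ ∀ x ∈ spectrum ℝ A, c ≤ x := by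
  rw [← Algebra.algebraMap_eq_smul_one]
  exact algebraMap_le_iff_le_spectrum hA.isSelfAdjoint

lemma le_smul_one_iff (hA : A.IsHermitian) {c : ℝ} :
    A ≤ c • (1 : Matrix ι ι ℝ) ↔ ∀ x ∈ spectrum ℝ A, x ≤ c := by
  rw [← Algebra.algebraMap_eq_smul_one]
  exact le_algebraMap_iff_spectrum_le hA.isSelfAdjoint

lemma iInf_eigenvalues_smul_one_le (hA : A.IsHermitian) :
    (⨅ k, hA.eigenvalues k) • (1 : Matrix ι ι ℝ) ≤ A := by
  rw [hA.smul_one_le_iff, hA.spectrum_real_eq_range_eigenvalues]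
  rintro _ ⟨k, rfl⟩
  exact ciInf_le (Set.finite_range _).bddBelow k

lemma le_iSup_eigenvalues_smul_one (hA : A.IsHermitian) :
    A ≤ (⨆ k, hA.eigenvalues k) • (1 : Matrix ι ι ℝ) := by
  rw [hA.le_smul_one_iff, hA.spectrum_real_eq_range_eigenvalues]
  rintro _ ⟨k, rfl⟩
  exact le_ciSup (Set.finite_range _).bddAbove k

lemma isUnit_of_smul_one_le (hA : A.IsHermitian) {a : ℝ} (ha : 0 < a) (h : a • 1 ≤ A) :
    IsUnit A := by
  by_contra hu
  exact (ha.trans_le ((hA.smul_one_le_iff.mp h) 0 ((spectrum.zero_mem_iff ℝ).mpr hu))).false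

lemma nonsing_inv_le_inv_smul_one (hA : A.IsHermitian) {a : ℝ} (ha : 0 < a) (h : a • 1 ≤ A) :
    A⁻¹ ≤ a⁻¹ • (1 : Matrix ι ι ℝ) := by
  rw [hA.inv.le_smul_one_iff, spectrum_nonsing_inv (hA.isUnit_of_smul_one_le ha h)]
  intro x hx
  simpa using inv_anti₀ ha ((hA.smul_one_le_iff.mp h) _ (Set.mem_inv.mp hx))

lemma inv_smul_one_le_nonsing_inv (hA : A.IsHermitian) {a b : ℝ} (ha : 0 < a)
    (hlo : a • 1 ≤ A) (hhi : A ≤ b • (1 : Matrix ι ι ℝ)) :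
    b⁻¹ • (1 : Matrix ι ι ℝ) ≤ A⁻¹ := by
  rw [hA.inv.smul_one_le_iff, spectrum_nonsing_inv (hA.isUnit_of_smul_one_le ha hlo)]
  intro x hx
  have hax := (hA.smul_one_le_iff.mp hlo) _ (Set.mem_inv.mp hx)
  simpa using inv_anti₀ (ha.trans_le hax) ((hA.le_smul_one_iff.mp hhi) _ (Set.mem_inv.mp hx))

end IsHermitian

lemma PosDef.iInf_eigenvalues_pos [Fintype ι] [DecidableEq ι] [Nonempty ι] {A : Matrix ι ι ℝ}
    (hA : A.PosDef) : 0 < ⨅ k, hA.1.eigenvalues k := by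
  obtain ⟨k, hk⟩ := exists_eq_ciInf_of_finite (f := hA.1.eigenvalues)
  rw [← hk]
  exact hA.eigenvalues_pos k

variable {n r K : Type*} [Fintype n] [Fintype r] [Fintype K] [DecidableEq K]

lemma exists_eq_mul_of_eigendecomposition {L : Matrix n n ℝ} {Y : Matrix n r ℝ}
    {P : Matrix r r ℝ} {V : Matrix n K ℝ} {e : K → ℝ} (hL : L = Y * P * Yᵀ)
    (hVE : L = V * diagonal e * Vᵀ) (hV : Vᵀ * V = 1) (he : ∀ k, e k ≠ 0) :
    ∃ B : Matrix r K ℝ, V = Y * B := by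
  refine ⟨P * Yᵀ * V * diagonal e⁻¹, ?_⟩
  have hee : diagonal e * diagonal e⁻¹ = (1 : Matrix K K ℝ) := by
    rw [diagonal_mul_diagonal, ← diagonal_one]
    exact congrArg diagonal (funext fun k => mul_inv_cancel₀ (he k))
  calc V = V * diagonal e * (Vᵀ * V) * diagonal e⁻¹ := by
        rw [hV, Matrix.mul_one, Matrix.mul_assoc, hee, Matrix.mul_one]
    _ = Y * (P * Yᵀ * V * diagonal e⁻¹) := by
        rw [← Matrix.mul_assoc (V * diagonal e), ← hVE, hL]
        simp only [Matrix.mul_assoc]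

variable {Y V : Matrix n K ℝ} {B : Matrix K K ℝ}

lemma mul_transpose_mul_transpose_mul_self_eq_one (hVB : V = Y * B) (hV : Vᵀ * V = 1) :
    B * Bᵀ * (Yᵀ * Y) = 1 := by
  rw [hVB, transpose_mul] at hV
  rw [Matrix.mul_assoc, mul_eq_one_comm, ← hV]
  simp only [Matrix.mul_assoc]

lemma mulVec_injective_of_eq_mul (hVB : V = Y * B) (hV : Vᵀ * V = 1) :
    Function.Injective Y.mulVec := by
  intro x x' h
  have hG := mul_transpose_mul_transpose_mul_self_eq_one hVB hV
  calc x = (B * Bᵀ * (Yᵀ * Y)) *ᵥ x := by rw [hG, one_mulVec]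
    _ = (B * Bᵀ * (Yᵀ * Y)) *ᵥ x' := by simp only [← mulVec_mulVec, h]
    _ = x' := by rw [hG, one_mulVec]

lemma dotProduct_self_row_eq (hVB : V = Y * B) (hV : Vᵀ * V = 1) (i : n) :
    V i ⬝ᵥ V i = Y i ⬝ᵥ ((Yᵀ * Y)⁻¹ *ᵥ Y i) := by
  have hrow : Y i ᵥ* B = V i := by rw [hVB]; rfl
  rw [inv_eq_left_inv (mul_transpose_mul_transpose_mul_self_eq_one hVB hV), ← mulVec_mulVec,
    dotProduct_mulVec, mulVec_transpose, hrow]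

lemma dotProduct_self_row_le_div (hVB : V = Y * B) (hV : Vᵀ * V = 1) {a : ℝ} (ha : 0 < a)
    (hlo : a • 1 ≤ Yᵀ * Y) (i : n) : V i ⬝ᵥ V i ≤ (Y i ⬝ᵥ Y i) / a := by
  rw [dotProduct_self_row_eq hVB hV, div_eq_inv_mul, ← dotProduct_smul_one_mulVec]
  exact dotProduct_mulVec_mono
    ((isHermitian_transpose_mul_self Y).nonsing_inv_le_inv_smul_one ha hlo) _

lemma div_le_dotProduct_self_row (hVB : V = Y * B) (hV : Vᵀ * V = 1) {a b : ℝ} (ha : 0 < a)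
    (hlo : a • 1 ≤ Yᵀ * Y) (hhi : Yᵀ * Y ≤ b • 1) (i : n) :
    (Y i ⬝ᵥ Y i) / b ≤ V i ⬝ᵥ V i := by
  rw [dotProduct_self_row_eq hVB hV, div_eq_inv_mul, ← dotProduct_smul_one_mulVec]
  exact dotProduct_mulVec_mono
    ((isHermitian_transpose_mul_self Y).inv_smul_one_le_nonsing_inv ha hlo hhi) _

end Matrix

section Probability

variable {ι : Type*} [Fintype ι] {p : ι → ℝ}

lemma sum_sq_le_one_of_sum_eq_one (h0 : ∀ k, 0 ≤ p k) (h1 : ∑ k, p k = 1) :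
    ∑ k, p k ^ 2 ≤ 1 := by
  simpa [h1] using Finset.sum_sq_le_sq_sum_of_nonneg (s := Finset.univ) fun k _ => h0 k

lemma inv_card_le_sum_sq_of_sum_eq_one (h1 : ∑ k, p k = 1) :
    (Fintype.card ι : ℝ)⁻¹ ≤ ∑ k, p k ^ 2 := by
  have h : 1 ≤ (Fintype.card ι : ℝ) * ∑ k, p k ^ 2 := by
    simpa [h1] using sq_sum_le_card_mul_sum_sq (s := Finset.univ) (f := p)
  have hcard : (0 : ℝ) < Fintype.card ι :=
    (Nat.cast_nonneg _).lt_of_ne fun h0 => by rw [← h0, zero_mul] at h; linarith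
  exact (inv_le_iff_one_le_mul₀' hcard).mpr h

end Probability

section Degrees

variable {ι : Type*} [Finite ι] {deg : ι → ℝ} {τ : ℝ}

lemma add_iInf_le (j : ι) : τ + ⨅ j, deg j ≤ deg j + τ := by
  linarith [ciInf_le (Set.finite_range deg).bddBelow j]

lemma le_add_iSup (j : ι) : deg j + τ ≤ τ + ⨆ j, deg j := by
  linarith [le_ciSup (Set.finite_range deg).bddAbove j]

lemma add_iInf_pos [Nonempty ι] (hpos : ∀ j, 0 < deg j + τ) : 0 < τ + ⨅ j, deg j := by
  obtain ⟨j, hj⟩ := exists_eq_ciInf_of_finite (f := deg)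
  rw [← hj]
  linarith [hpos j]

lemma add_iSup_pos [Nonempty ι] (hpos : ∀ j, 0 < deg j + τ) : 0 < τ + ⨆ j, deg j :=
  (add_iInf_pos hpos).trans_le ((add_iInf_le (Classical.arbitrary ι)).trans (le_add_iSup _))

end Degrees

section MMSB

variable {n K : ℕ} {Pi : Matrix (Fin n) (Fin K) ℝ} {deg : Fin n → ℝ} {τ : ℝ}

noncomputable def scaledMembership (Pi : Matrix (Fin n) (Fin K) ℝ) (deg : Fin n → ℝ)
    (τ : ℝ) : Matrix (Fin n) (Fin K) ℝ :=
  diagonal (fun i => (√(deg i + τ))⁻¹) * Pi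

lemma diagonal_mul_mul_diagonal_eq_scaledMembership (P : Matrix (Fin K) (Fin K) ℝ) :
    diagonal (fun i => (√(deg i + τ))⁻¹) * (Pi * P * Piᵀ) *
        diagonal (fun i => (√(deg i + τ))⁻¹) =
      scaledMembership Pi deg τ * P * (scaledMembership Pi deg τ)ᵀ := by
  simp only [scaledMembership, transpose_mul, diagonal_transpose, Matrix.mul_assoc]

lemma transpose_mul_self_scaledMembership (hpos : ∀ j, 0 < deg j + τ) :
    (scaledMembership Pi deg τ)ᵀ * scaledMembership Pi deg τ =
      Piᵀ * diagonal (fun j => (deg j + τ)⁻¹) * Pi := by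
  have hs : (fun j => (√(deg j + τ))⁻¹ * (√(deg j + τ))⁻¹) =
      fun j => (deg j + τ)⁻¹ :=
    funext fun j => by rw [← mul_inv, Real.mul_self_sqrt (hpos j).le]
  rw [scaledMembership, transpose_mul, diagonal_transpose, Matrix.mul_assoc,
    ← Matrix.mul_assoc _ _ Pi, diagonal_mul_diagonal, hs, Matrix.mul_assoc]

lemma dotProduct_self_scaledMembership_row (hpos : ∀ j, 0 < deg j + τ) (i : Fin n) :
    scaledMembership Pi deg τ i ⬝ᵥ scaledMembership Pi deg τ i =
      (deg i + τ)⁻¹ * ∑ k, Pi i k ^ 2 := by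
  simp only [scaledMembership, diagonal_mul, dotProduct, Finset.mul_sum]
  refine Finset.sum_congr rfl fun k _ => ?_
  rw [← Real.sqrt_inv, show ∀ a b : ℝ, a * b * (a * b) = (a * a) * b ^ 2 from
    fun a b => by ring, Real.mul_self_sqrt (inv_nonneg.mpr (hpos i).le)]

lemma posDef_transpose_mul_self_of_eq_scaledMembership_mul {V : Matrix (Fin n) (Fin K) ℝ}
    {B : Matrix (Fin K) (Fin K) ℝ} (hVB : V = scaledMembership Pi deg τ * B)
    (hV : Vᵀ * V = 1) : (Piᵀ * Pi).PosDef := by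
  rw [← conjTranspose_eq_transpose_of_trivial]
  exact PosDef.conjTranspose_mul_self Pi fun x x' hx =>
    mulVec_injective_of_eq_mul hVB hV (by simp only [scaledMembership, ← mulVec_mulVec, hx])

lemma smul_one_le_transpose_mul_self_scaledMembership [Nonempty (Fin n)]
    (hpos : ∀ j, 0 < deg j + τ) (hH : (Piᵀ * Pi).IsHermitian) :
    ((τ + ⨆ j, deg j)⁻¹ * ⨅ k, hH.eigenvalues k) • (1 : Matrix (Fin K) (Fin K) ℝ) ≤
      (scaledMembership Pi deg τ)ᵀ * scaledMembership Pi deg τ := by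
  rw [transpose_mul_self_scaledMembership hpos, mul_smul]
  calc _ ≤ (τ + ⨆ j, deg j)⁻¹ • (Piᵀ * Pi) :=
        smul_le_smul_of_nonneg hH.iInf_eigenvalues_smul_one_le
          (inv_nonneg.mpr (add_iSup_pos hpos).le)
    _ = _ := smul_transpose_mul_self _ _
    _ ≤ _ := transpose_mul_diagonal_mul_mono _ fun j => inv_anti₀ (hpos j) (le_add_iSup j)

lemma transpose_mul_self_scaledMembership_le_smul_one [Nonempty (Fin n)]
    (hpos : ∀ j, 0 < deg j + τ) (hH : (Piᵀ * Pi).IsHermitian) :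
    (scaledMembership Pi deg τ)ᵀ * scaledMembership Pi deg τ ≤
      ((τ + ⨅ j, deg j)⁻¹ * ⨆ k, hH.eigenvalues k) • 1 := by
  rw [transpose_mul_self_scaledMembership hpos, mul_smul]
  calc _ ≤ _ := transpose_mul_diagonal_mul_mono _ fun j =>
        inv_anti₀ (add_iInf_pos hpos) (add_iInf_le j)
    _ = (τ + ⨅ j, deg j)⁻¹ • (Piᵀ * Pi) := (smul_transpose_mul_self _ _).symm
    _ ≤ _ := smul_le_smul_of_nonneg hH.le_iSup_eigenvalues_smul_one
        (inv_nonneg.mpr (add_iInf_pos hpos).le)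

lemma dotProduct_self_scaledMembership_row_le (hpos : ∀ j, 0 < deg j + τ) {i : Fin n}
    (h0 : ∀ k, 0 ≤ Pi i k) (h1 : ∑ k, Pi i k = 1) :
    scaledMembership Pi deg τ i ⬝ᵥ scaledMembership Pi deg τ i ≤
      (τ + ⨅ j, deg j)⁻¹ := by
  have : Nonempty (Fin n) := ⟨i⟩
  rw [dotProduct_self_scaledMembership_row hpos]
  calc _ ≤ (deg i + τ)⁻¹ * 1 :=
        mul_le_mul_of_nonneg_left (sum_sq_le_one_of_sum_eq_one h0 h1) (inv_nonneg.mpr (hpos i).le)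
    _ ≤ _ := by rw [mul_one]; exact inv_anti₀ (add_iInf_pos hpos) (add_iInf_le i)

lemma le_dotProduct_self_scaledMembership_row (hpos : ∀ j, 0 < deg j + τ) {i : Fin n}
    (h1 : ∑ k, Pi i k = 1) :
    (τ + ⨆ j, deg j)⁻¹ * (K : ℝ)⁻¹ ≤
      scaledMembership Pi deg τ i ⬝ᵥ scaledMembership Pi deg τ i := by
  have hK := inv_card_le_sum_sq_of_sum_eq_one h1
  rw [Fintype.card_fin] at hK
  rw [dotProduct_self_scaledMembership_row hpos]
  exact mul_le_mul (inv_anti₀ (hpos i) (le_add_iSup i)) hK (by positivity)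
    (inv_nonneg.mpr (hpos i).le)

end MMSB

lemma rowNorm_eq_sqrt_dotProduct {m k : ℕ} (M : Matrix (Fin m) (Fin k) ℝ) (i : Fin m) :
    rowNorm M i = √(M i ⬝ᵥ M i) := by
  simp only [rowNorm, dotProduct, sq]

theorem stmt_9_general
    {n K : ℕ}
    (Pi : Matrix (Fin n) (Fin K) ℝ)
    (hPi_nonneg : ∀ i k, 0 ≤ Pi i k)
    (hPi_rowsum : ∀ i, ∑ k, Pi i k = 1)
    (Pt : Matrix (Fin K) (Fin K) ℝ)
    (ρ τ : ℝ)
    (Om : Matrix (Fin n) (Fin n) ℝ) (hOm : Om = Pi * (ρ • Pt) * Piᵀ)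
    (deg : Fin n → ℝ)
    (hpos : ∀ i, 0 < deg i + τ)
    (Ltau : Matrix (Fin n) (Fin n) ℝ)
    (hLtau : Ltau = Matrix.diagonal (fun i => (Real.sqrt (deg i + τ))⁻¹) * Om *
      Matrix.diagonal (fun i => (Real.sqrt (deg i + τ))⁻¹))
    (V : Matrix (Fin n) (Fin K) ℝ) (e : Fin K → ℝ)
    (hVorth : Vᵀ * V = 1) (he : ∀ k, e k ≠ 0)
    (hVE : Ltau = V * Matrix.diagonal e * Vᵀ)
    (hH : (Piᵀ * Pi).IsHermitian) :
    ∀ i : Fin n,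
      Real.sqrt ((τ + ⨅ j, deg j) / (τ + ⨆ j, deg j)) *
          (Real.sqrt ((K : ℝ) * ⨆ k, hH.eigenvalues k))⁻¹ ≤ rowNorm V i ∧
      rowNorm V i ≤ Real.sqrt ((τ + ⨆ j, deg j) / (τ + ⨅ j, deg j)) *
          (Real.sqrt (⨅ k, hH.eigenvalues k))⁻¹ := by
  intro i
  have : Nonempty (Fin n) := ⟨i⟩
  obtain ⟨k, -, -⟩ := Finset.exists_ne_zero_of_sum_ne_zero ((hPi_rowsum i).trans_ne one_ne_zero)
  have : Nonempty (Fin K) := ⟨k⟩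
  obtain ⟨B, hVB⟩ := exists_eq_mul_of_eigendecomposition
    (hLtau.trans (hOm ▸ diagonal_mul_mul_diagonal_eq_scaledMembership (ρ • Pt))) hVE hVorth he
  have hPD := posDef_transpose_mul_self_of_eq_scaledMembership_mul hVB hVorth
  have hδm := add_iInf_pos hpos
  have hδM := add_iSup_pos hpos
  have hμm : 0 < ⨅ k, hH.eigenvalues k := hPD.iInf_eigenvalues_pos
  have hμM : 0 ≤ ⨆ k, hH.eigenvalues k := Real.iSup_nonneg fun k => (hPD.eigenvalues_pos k).le
  have hlo := smul_one_le_transpose_mul_self_scaledMembership hpos hH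
  have hhi := transpose_mul_self_scaledMembership_le_smul_one hpos hH
  have hYlo := le_dotProduct_self_scaledMembership_row hpos (hPi_rowsum i)
  have hYhi := dotProduct_self_scaledMembership_row_le hpos (hPi_nonneg i) (hPi_rowsum i)
  set dm := τ + ⨅ j, deg j
  set dM := τ + ⨆ j, deg j
  set μm := ⨅ k, hH.eigenvalues k
  set μM := ⨆ k, hH.eigenvalues k
  have ha : 0 < dM⁻¹ * μm := mul_pos (inv_pos.mpr hδM) hμm
  rw [rowNorm_eq_sqrt_dotProduct, ← div_eq_mul_inv, ← div_eq_mul_inv,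
    ← Real.sqrt_div (div_nonneg hδm.le hδM.le), ← Real.sqrt_div (div_nonneg hδM.le hδm.le)]
  constructor
  · refine Real.sqrt_le_sqrt (le_trans ?_ (div_le_dotProduct_self_row hVB hVorth ha hlo hhi i))
    calc _ = dM⁻¹ * (K : ℝ)⁻¹ / (dm⁻¹ * μM) := by field_simp
      _ ≤ _ := div_le_div_of_nonneg_right hYlo (mul_nonneg (inv_nonneg.mpr hδm.le) hμM)
  · refine Real.sqrt_le_sqrt ((dotProduct_self_row_le_div hVB hVorth ha hlo i).trans ?_)
    calc _ ≤ dm⁻¹ / (dM⁻¹ * μm) := div_le_div_of_nonneg_right hYhi ha.le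
      _ = _ := by field_simp

/-- Lemma B.2: for every node `i`,
`√((τ+δ_min)/(τ+δ_max)) / √(K λ₁(Π'Π)) ≤ ‖V(i,:)‖ ≤ √((τ+δ_max)/(τ+δ_min)) / √(λ_K(Π'Π))`. -/
theorem stmt_9
    {n K : ℕ} (hn : 0 < n) (hK : 0 < K) (hKn : K ≤ n)
    (Pi : Matrix (Fin n) (Fin K) ℝ)
    (hPi_nonneg : ∀ i k, 0 ≤ Pi i k)
    (hPi_rowsum : ∀ i, ∑ k, Pi i k = 1)
    (hPi_rank : Pi.rank = K)
    (hpure : ∀ k : Fin K, ∃ i : Fin n, ∀ l, Pi i l = if l = k then 1 else 0)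
    (Pt : Matrix (Fin K) (Fin K) ℝ)
    (hPt_symm : Pt.IsSymm)
    (hPt_nonneg : ∀ k l, 0 ≤ Pt k l)
    (hPt_rank : Pt.rank = K)
    (hPt_le_one : ∀ k l, Pt k l ≤ 1)
    (hPt_max : ∃ k l, Pt k l = 1)
    (ρ τ : ℝ) (hρ0 : 0 < ρ) (hρ1 : ρ ≤ 1) (hτ : 0 ≤ τ)
    (Om : Matrix (Fin n) (Fin n) ℝ) (hOm : Om = Pi * (ρ • Pt) * Piᵀ)
    (deg : Fin n → ℝ) (hdeg : ∀ i, deg i = ∑ j, Om i j)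
    (hpos : ∀ i, 0 < deg i + τ)
    (Ltau : Matrix (Fin n) (Fin n) ℝ)
    (hLtau : Ltau = Matrix.diagonal (fun i => (Real.sqrt (deg i + τ))⁻¹) * Om *
      Matrix.diagonal (fun i => (Real.sqrt (deg i + τ))⁻¹))
    (Idx : Fin K → Fin n) (hIdx : Pi.submatrix Idx id = 1)
    (V : Matrix (Fin n) (Fin K) ℝ) (e : Fin K → ℝ)
    (hVorth : Vᵀ * V = 1) (he : ∀ k, e k ≠ 0)
    (hVE : Ltau = V * Matrix.diagonal e * Vᵀ)
    (hH : (Piᵀ * Pi).IsHermitian) :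
    ∀ i : Fin n,
      Real.sqrt ((τ + ⨅ j, deg j) / (τ + ⨆ j, deg j)) *
          (Real.sqrt ((K : ℝ) * ⨆ k, hH.eigenvalues k))⁻¹ ≤ rowNorm V i ∧
      rowNorm V i ≤ Real.sqrt ((τ + ⨆ j, deg j) / (τ + ⨅ j, deg j)) *
          (Real.sqrt (⨅ k, hH.eigenvalues k))⁻¹ :=
  stmt_9_general Pi hPi_nonneg hPi_rowsum Pt ρ τ Om hOm deg hpos Ltau hLtau V e hVorth he hVE hH
end

section
/- Under the MMSB setup: λ_1(V_{τ,1}(𝓘,:) V_{τ,1}(𝓘,:)') ≤ (τ+δ_max)/λ_K(Π'Π); λ_K(V_{τ,1}(𝓘,:) V_{τ,1}(𝓘,:)') ≥ (τ+δ_min)/λ_1(Π'Π); λ_1(V_{*,1}(𝓘,:) V_{*,1}(𝓘,:)') ≤ K · ((τ+δ_max)/(τ+δ_min)) · κ(Π'Π); and λ_K(V_{*,1}(𝓘,:) V_{*,1}(𝓘,:)') ≥ ((τ+δ_min)/(τ+δ_max)) · κ(Π'Π)^{-1}. -/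
/-!
Write `B = V_{τ,1}(𝓘,:)`. From `𝓛_τ = V E V'` and `V'V = I` we get `V = 𝓛_τ V E⁻¹`, hence
`V_{τ,1} = 𝒟_τ^{1/2} V = Ω 𝒟_τ^{-1/2} V E⁻¹ = Π X`; reading off the pure rows `𝓘`, where `Π` is the
identity, gives `X = B`, so `V_{τ,1} = Π B`. Since `V` has orthonormal columns, `‖V_{τ,1} y‖²` lies
between `(τ + δ_min) ‖y‖²` and `(τ + δ_max) ‖y‖²`, while `‖Π u‖²` lies between `λ_K(Π'Π) ‖u‖²` and
`λ_1(Π'Π) ‖u‖²`. Hence `‖B y‖² / ‖y‖²` lies between `(τ + δ_min) / λ_1` and `(τ + δ_max) / λ_K`, and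
so does `‖B' x‖² / ‖x‖²` because `B` is square: these are the bounds on `B B'`.

`V_{*,1}(𝓘,:)` is `B` with its rows normalised. Its rows are unit vectors, so `λ_1` is at most its
squared Frobenius norm `K`; and its transpose is `B'` after dividing the coordinates by the row norms
of `B`, which are at most `√((τ + δ_max) / λ_K)`.
-/

open Matrix BigOperators

namespace Matrix

lemma mulVec_injective_of_submatrix_eq_one {m k : Type*} [Fintype k] [DecidableEq k]
    {A : Matrix m k ℝ} {e : k → m} (he : A.submatrix e id = 1) : Function.Injective A.mulVec :=
  fun u v huv => by
    have key : ∀ w, A.submatrix e id *ᵥ w = fun i => (A *ᵥ w) (e i) := fun w => rfl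
    rw [← one_mulVec u, ← one_mulVec v, ← he, key, key, huv]

lemma eq_mul_submatrix_of_eq_mul {l m k : Type*} [Fintype k] [DecidableEq k] {A : Matrix m k ℝ}
    {M : Matrix m l ℝ} {X : Matrix k l ℝ} {e : k → m} (he : A.submatrix e id = 1)
    (hM : M = A * X) : M = A * M.submatrix e id := by
  subst hM
  rw [submatrix_mul A X e id id Function.bijective_id, he, submatrix_id_id, Matrix.one_mul]

variable {k m : Type*} [Fintype k] [Fintype m]

lemma dotProduct_self_nonneg (x : k → ℝ) : 0 ≤ x ⬝ᵥ x :=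
  Finset.sum_nonneg fun i _ => mul_self_nonneg (x i)

lemma dotProduct_sq_le (x y : k → ℝ) : (x ⬝ᵥ y) ^ 2 ≤ (x ⬝ᵥ x) * (y ⬝ᵥ y) := by
  simpa only [dotProduct, sq] using Finset.sum_mul_sq_le_sq_mul_sq Finset.univ x y

lemma dotProduct_mulVec_mul_transpose (M : Matrix m k ℝ) (x : m → ℝ) :
    x ⬝ᵥ (M * Mᵀ) *ᵥ x = (Mᵀ *ᵥ x) ⬝ᵥ (Mᵀ *ᵥ x) := by
  rw [← mulVec_mulVec, dotProduct_mulVec, ← mulVec_transpose]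

lemma dotProduct_mulVec_transpose_mul (M : Matrix m k ℝ) (x : k → ℝ) :
    x ⬝ᵥ (Mᵀ * M) *ᵥ x = (M *ᵥ x) ⬝ᵥ (M *ᵥ x) := by
  simpa using dotProduct_mulVec_mul_transpose Mᵀ x

lemma transpose_mulVec_dotProduct_le {B : Matrix k k ℝ} {c : ℝ} (hc : 0 ≤ c)
    (h : ∀ y, (B *ᵥ y) ⬝ᵥ (B *ᵥ y) ≤ c * (y ⬝ᵥ y)) (x : k → ℝ) :
    (Bᵀ *ᵥ x) ⬝ᵥ (Bᵀ *ᵥ x) ≤ c * (x ⬝ᵥ x) := by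
  have hu : x ⬝ᵥ B *ᵥ (Bᵀ *ᵥ x) = (Bᵀ *ᵥ x) ⬝ᵥ (Bᵀ *ᵥ x) := by
    rw [dotProduct_mulVec, ← mulVec_transpose]
  have key : ((Bᵀ *ᵥ x) ⬝ᵥ (Bᵀ *ᵥ x)) ^ 2 ≤ (x ⬝ᵥ x) * (c * ((Bᵀ *ᵥ x) ⬝ᵥ (Bᵀ *ᵥ x))) := by
    rw [← hu]
    refine (dotProduct_sq_le _ _).trans (mul_le_mul_of_nonneg_left ?_ (dotProduct_self_nonneg x))
    rw [hu]
    exact h _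
  rcases (dotProduct_self_nonneg (Bᵀ *ᵥ x)).eq_or_lt with h0 | hpos
  · rw [← h0]
    exact mul_nonneg hc (dotProduct_self_nonneg x)
  · exact le_of_mul_le_mul_right (by linarith) hpos

lemma le_transpose_mulVec_dotProduct [DecidableEq k] {B : Matrix k k ℝ} {c : ℝ} (hc : 0 < c)
    (h : ∀ y, c * (y ⬝ᵥ y) ≤ (B *ᵥ y) ⬝ᵥ (B *ᵥ y)) (x : k → ℝ) :
    c * (x ⬝ᵥ x) ≤ (Bᵀ *ᵥ x) ⬝ᵥ (Bᵀ *ᵥ x) := by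
  -- `B` is injective, hence onto: write `x = B y` and apply Cauchy–Schwarz to `‖x‖² = ⟪Bᵀ x, y⟫`.
  have hinj : Function.Injective B.mulVec := by
    refine (injective_iff_map_eq_zero B.mulVecLin).2 fun y hy => dotProduct_self_eq_zero.1 ?_
    have hy' := h y
    rw [mulVecLin_apply] at hy
    rw [hy, zero_dotProduct] at hy'
    nlinarith [dotProduct_self_nonneg y]
  obtain ⟨y, rfl⟩ := mulVec_surjective_iff_isUnit.2 (mulVec_injective_iff_isUnit.1 hinj) x
  have key : ((B *ᵥ y) ⬝ᵥ (B *ᵥ y)) ^ 2 ≤ ((Bᵀ *ᵥ (B *ᵥ y)) ⬝ᵥ (Bᵀ *ᵥ (B *ᵥ y))) * (y ⬝ᵥ y) := by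
    conv_lhs => rw [dotProduct_mulVec, ← mulVec_transpose]
    exact dotProduct_sq_le _ _
  rcases (dotProduct_self_nonneg (B *ᵥ y)).eq_or_lt with h0 | hpos
  · rw [← h0, mul_zero]
    exact dotProduct_self_nonneg _
  · refine le_of_mul_le_mul_right ?_ hpos
    nlinarith [mul_le_mul_of_nonneg_left (h y) (dotProduct_self_nonneg (Bᵀ *ᵥ (B *ᵥ y)))]

lemma transpose_mulVec_dotProduct_le_sum (M : Matrix m k ℝ) (x : m → ℝ) :
    (Mᵀ *ᵥ x) ⬝ᵥ (Mᵀ *ᵥ x) ≤ (∑ i, M i ⬝ᵥ M i) * (x ⬝ᵥ x) :=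
  calc (Mᵀ *ᵥ x) ⬝ᵥ (Mᵀ *ᵥ x) = ∑ j, (Mᵀ j ⬝ᵥ x) ^ 2 := by simp only [dotProduct, mulVec, sq]
    _ ≤ ∑ j, (Mᵀ j ⬝ᵥ Mᵀ j) * (x ⬝ᵥ x) := Finset.sum_le_sum fun j _ => dotProduct_sq_le _ _
    _ = (∑ i, M i ⬝ᵥ M i) * (x ⬝ᵥ x) := by
      rw [← Finset.sum_mul]
      simp only [dotProduct, transpose_apply]
      rw [Finset.sum_comm]

namespace IsHermitian

variable [DecidableEq k] {A : Matrix k k ℝ} (hA : A.IsHermitian)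

lemma dotProduct_eigenvectorBasis_self (i : k) :
    ⇑(hA.eigenvectorBasis i) ⬝ᵥ ⇑(hA.eigenvectorBasis i) = 1 := by
  have := EuclideanSpace.inner_eq_star_dotProduct (hA.eigenvectorBasis i) (hA.eigenvectorBasis i)
  rw [real_inner_self_eq_norm_sq, hA.eigenvectorBasis.orthonormal.1 i] at this
  simpa using this.symm

lemma dotProduct_mulVec_eigenvectorBasis (i : k) :
    ⇑(hA.eigenvectorBasis i) ⬝ᵥ A *ᵥ ⇑(hA.eigenvectorBasis i) = hA.eigenvalues i := by
  rw [mulVec_eigenvectorBasis, dotProduct_smul, dotProduct_eigenvectorBasis_self, smul_eq_mul,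
    mul_one]

lemma exists_dotProduct_mulVec_eq_sum (x : k → ℝ) : ∃ y : k → ℝ,
    x ⬝ᵥ A *ᵥ x = ∑ i, hA.eigenvalues i * y i ^ 2 ∧ x ⬝ᵥ x = ∑ i, y i ^ 2 := by
  set U : Matrix k k ℝ := (hA.eigenvectorUnitary : Matrix k k ℝ)
  have hUt : star U = Uᵀ := conjTranspose_eq_transpose_of_trivial U
  have hUUt : U * Uᵀ = 1 := hUt ▸ Unitary.mul_star_self_of_mem hA.eigenvectorUnitary.2
  have hA' : A = U * diagonal hA.eigenvalues * Uᵀ := by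
    conv_lhs => rw [hA.spectral_theorem]
    rw [Unitary.conjStarAlgAut_apply, hUt]
    rfl
  refine ⟨Uᵀ *ᵥ x, ?_, ?_⟩
  · conv_lhs => rw [hA', ← mulVec_mulVec, ← mulVec_mulVec, dotProduct_mulVec x U,
      ← mulVec_transpose, dotProduct]
    simp only [mulVec_diagonal]
    exact Finset.sum_congr rfl fun i _ => by ring
  · have hx : x ⬝ᵥ x = (Uᵀ *ᵥ x) ⬝ᵥ (Uᵀ *ᵥ x) := by
      rw [← dotProduct_mulVec_mul_transpose, hUUt, one_mulVec]
    rw [hx, dotProduct]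
    exact Finset.sum_congr rfl fun i _ => by ring

lemma dotProduct_mulVec_le_iSup_eigenvalues_mul (x : k → ℝ) :
    x ⬝ᵥ A *ᵥ x ≤ (⨆ i, hA.eigenvalues i) * (x ⬝ᵥ x) := by
  obtain ⟨y, hAx, hx⟩ := hA.exists_dotProduct_mulVec_eq_sum x
  rw [hAx, hx, Finset.mul_sum]
  exact Finset.sum_le_sum fun i _ => mul_le_mul_of_nonneg_right
    (le_ciSup (Set.finite_range _).bddAbove i) (sq_nonneg _)

lemma iInf_eigenvalues_mul_le_dotProduct_mulVec (x : k → ℝ) :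
    (⨅ i, hA.eigenvalues i) * (x ⬝ᵥ x) ≤ x ⬝ᵥ A *ᵥ x := by
  obtain ⟨y, hAx, hx⟩ := hA.exists_dotProduct_mulVec_eq_sum x
  rw [hAx, hx, Finset.mul_sum]
  exact Finset.sum_le_sum fun i _ => mul_le_mul_of_nonneg_right
    (ciInf_le (Set.finite_range _).bddBelow i) (sq_nonneg _)

variable [Nonempty k]

lemma iSup_eigenvalues_le {c : ℝ} (h : ∀ x, x ⬝ᵥ A *ᵥ x ≤ c * (x ⬝ᵥ x)) :
    ⨆ i, hA.eigenvalues i ≤ c :=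
  ciSup_le fun i => by
    simpa [dotProduct_mulVec_eigenvectorBasis, dotProduct_eigenvectorBasis_self] using
      h (hA.eigenvectorBasis i)

lemma le_iInf_eigenvalues {c : ℝ} (h : ∀ x, c * (x ⬝ᵥ x) ≤ x ⬝ᵥ A *ᵥ x) :
    c ≤ ⨅ i, hA.eigenvalues i :=
  le_ciInf fun i => by
    simpa [dotProduct_mulVec_eigenvectorBasis, dotProduct_eigenvectorBasis_self] using
      h (hA.eigenvectorBasis i)

end IsHermitian

lemma iInf_eigenvalues_transpose_mul_self_pos [DecidableEq k] [Nonempty k] {P : Matrix m k ℝ}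
    (hP : Function.Injective P.mulVec) (hH : (Pᵀ * P).IsHermitian) :
    0 < ⨅ i, hH.eigenvalues i := by
  have hPD := PosDef.conjTranspose_mul_self P hP
  rw [conjTranspose_eq_transpose_of_trivial] at hPD
  obtain ⟨i, hi⟩ := exists_eq_ciInf_of_finite (f := hH.eigenvalues)
  exact hi ▸ hPD.eigenvalues_pos i

section

variable {l : Type*} [Fintype l] [DecidableEq k] {P : Matrix m k ℝ} {B : Matrix k l ℝ} {a : ℝ}

lemma dotProduct_mulVec_le_div_iInf_eigenvalues (hH : (Pᵀ * P).IsHermitian)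
    (hpos : 0 < ⨅ i, hH.eigenvalues i)
    (hPB : ∀ y, ((P * B) *ᵥ y) ⬝ᵥ ((P * B) *ᵥ y) ≤ a * (y ⬝ᵥ y)) (y : l → ℝ) :
    (B *ᵥ y) ⬝ᵥ (B *ᵥ y) ≤ a / (⨅ i, hH.eigenvalues i) * (y ⬝ᵥ y) := by
  have hP := hH.iInf_eigenvalues_mul_le_dotProduct_mulVec (B *ᵥ y)
  have hy := hPB y
  rw [dotProduct_mulVec_transpose_mul] at hP
  rw [← mulVec_mulVec] at hy
  rw [div_mul_eq_mul_div, le_div_iff₀ hpos, mul_comm]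
  exact hP.trans hy

lemma div_iSup_eigenvalues_mul_le_dotProduct_mulVec (hH : (Pᵀ * P).IsHermitian)
    (hpos : 0 < ⨆ i, hH.eigenvalues i)
    (hPB : ∀ y, a * (y ⬝ᵥ y) ≤ ((P * B) *ᵥ y) ⬝ᵥ ((P * B) *ᵥ y)) (y : l → ℝ) :
    a / (⨆ i, hH.eigenvalues i) * (y ⬝ᵥ y) ≤ (B *ᵥ y) ⬝ᵥ (B *ᵥ y) := by
  have hP := hH.dotProduct_mulVec_le_iSup_eigenvalues_mul (B *ᵥ y)
  have hy := hPB y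
  rw [dotProduct_mulVec_transpose_mul] at hP
  rw [← mulVec_mulVec] at hy
  rw [div_mul_eq_mul_div, div_le_iff₀ hpos, mul_comm _ (⨆ i, _)]
  exact hy.trans hP

end

lemma diagonal_mul_eq_mul_of_eq_mul_diagonal_mul_transpose [DecidableEq m] [DecidableEq k]
    {Om : Matrix m m ℝ} {V : Matrix m k ℝ} {s : m → ℝ} {e : k → ℝ} (hs : ∀ i, s i ≠ 0)
    (he : ∀ j, e j ≠ 0) (hV : Vᵀ * V = 1)
    (hL : diagonal (fun i => (s i)⁻¹) * Om * diagonal (fun i => (s i)⁻¹) = V * diagonal e * Vᵀ) :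
    diagonal s * V = Om * (diagonal (fun i => (s i)⁻¹) * V * diagonal (fun j => (e j)⁻¹)) := by
  have hVe : V = V * diagonal e * Vᵀ * V * diagonal (fun j => (e j)⁻¹) := by
    rw [Matrix.mul_assoc (V * diagonal e), hV, Matrix.mul_one, Matrix.mul_assoc,
      diagonal_mul_diagonal]
    simp [he]
  have hs' : diagonal s * diagonal (fun i => (s i)⁻¹) = 1 := by
    rw [diagonal_mul_diagonal]
    simp [hs]
  conv_lhs => rw [hVe, ← hL]
  simp only [← Matrix.mul_assoc, hs', Matrix.one_mul]

lemma diagonal_mul_eq_mul_submatrix_of_eq_mul_diagonal_mul_transpose [DecidableEq m]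
    [DecidableEq k] {P : Matrix m k ℝ} {X : Matrix k k ℝ} {V : Matrix m k ℝ} {s : m → ℝ}
    {e : k → ℝ} {ι : k → m} (hι : P.submatrix ι id = 1) (hs : ∀ i, s i ≠ 0) (he : ∀ j, e j ≠ 0)
    (hV : Vᵀ * V = 1)
    (hL : diagonal (fun i => (s i)⁻¹) * (P * X * Pᵀ) * diagonal (fun i => (s i)⁻¹) =
      V * diagonal e * Vᵀ) :
    diagonal s * V = P * (diagonal s * V).submatrix ι id := by
  apply eq_mul_submatrix_of_eq_mul hι
  rw [diagonal_mul_eq_mul_of_eq_mul_diagonal_mul_transpose hs he hV hL]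
  simp only [Matrix.mul_assoc]
  rfl

lemma diagonal_sqrt_mul_mulVec_dotProduct [DecidableEq m] (V : Matrix m k ℝ) {d : m → ℝ}
    (hd : ∀ i, 0 ≤ d i) (y : k → ℝ) :
    ((diagonal fun i => √(d i)) * V) *ᵥ y ⬝ᵥ ((diagonal fun i => √(d i)) * V) *ᵥ y =
      ∑ i, d i * (V *ᵥ y) i ^ 2 := by
  rw [← mulVec_mulVec, dotProduct]
  simp only [mulVec_diagonal]
  exact Finset.sum_congr rfl fun i _ => by rw [mul_mul_mul_comm, Real.mul_self_sqrt (hd i), sq]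

lemma dotProduct_mulVec_self_of_transpose_mul_self_eq_one [DecidableEq k] {V : Matrix m k ℝ}
    (hV : Vᵀ * V = 1) (y : k → ℝ) : (V *ᵥ y) ⬝ᵥ (V *ᵥ y) = y ⬝ᵥ y := by
  rw [← dotProduct_mulVec_transpose_mul, hV, one_mulVec]

section

variable [DecidableEq m] [DecidableEq k] {V : Matrix m k ℝ} {d : m → ℝ}

lemma mul_dotProduct_le_diagonal_sqrt_mul_mulVec (hV : Vᵀ * V = 1) {a : ℝ} (ha : 0 ≤ a)
    (hd : ∀ i, a ≤ d i) (y : k → ℝ) :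
    a * (y ⬝ᵥ y) ≤
      ((diagonal fun i => √(d i)) * V) *ᵥ y ⬝ᵥ ((diagonal fun i => √(d i)) * V) *ᵥ y := by
  rw [diagonal_sqrt_mul_mulVec_dotProduct V (fun i => ha.trans (hd i)),
    ← dotProduct_mulVec_self_of_transpose_mul_self_eq_one hV, dotProduct, Finset.mul_sum]
  exact Finset.sum_le_sum fun i _ => by
    rw [← sq]
    exact mul_le_mul_of_nonneg_right (hd i) (sq_nonneg _)

lemma diagonal_sqrt_mul_mulVec_le_mul_dotProduct (hV : Vᵀ * V = 1) {b : ℝ} (hd₀ : ∀ i, 0 ≤ d i)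
    (hd : ∀ i, d i ≤ b) (y : k → ℝ) :
    ((diagonal fun i => √(d i)) * V) *ᵥ y ⬝ᵥ ((diagonal fun i => √(d i)) * V) *ᵥ y ≤
      b * (y ⬝ᵥ y) := by
  rw [diagonal_sqrt_mul_mulVec_dotProduct V hd₀,
    ← dotProduct_mulVec_self_of_transpose_mul_self_eq_one hV, dotProduct, Finset.mul_sum]
  exact Finset.sum_le_sum fun i _ => by
    rw [← sq]
    exact mul_le_mul_of_nonneg_right (hd i) (sq_nonneg _)

end

section

variable [DecidableEq k] [Nonempty k] {B : Matrix k k ℝ} {c : ℝ}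

lemma iSup_eigenvalues_mul_transpose_le (hBB : (B * Bᵀ).IsHermitian) (hc : 0 ≤ c)
    (h : ∀ y, (B *ᵥ y) ⬝ᵥ (B *ᵥ y) ≤ c * (y ⬝ᵥ y)) : ⨆ i, hBB.eigenvalues i ≤ c :=
  hBB.iSup_eigenvalues_le fun x => by
    rw [dotProduct_mulVec_mul_transpose]
    exact transpose_mulVec_dotProduct_le hc h x

lemma le_iInf_eigenvalues_mul_transpose (hBB : (B * Bᵀ).IsHermitian) (hc : 0 < c)
    (h : ∀ y, c * (y ⬝ᵥ y) ≤ (B *ᵥ y) ⬝ᵥ (B *ᵥ y)) : c ≤ ⨅ i, hBB.eigenvalues i :=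
  hBB.le_iInf_eigenvalues fun x => by
    rw [dotProduct_mulVec_mul_transpose]
    exact le_transpose_mulVec_dotProduct hc h x

end

end Matrix

section

variable {m k : ℕ}

lemma rowNorm_sq (M : Matrix (Fin m) (Fin k) ℝ) (i : Fin m) : rowNorm M i ^ 2 = M i ⬝ᵥ M i := by
  rw [rowNorm, Real.sq_sqrt (Finset.sum_nonneg fun j _ => sq_nonneg _), dotProduct]
  simp only [sq]

lemma div_rowNorm_diagonal_mul {s : Fin m → ℝ} (hs : ∀ i, 0 < s i)
    (M : Matrix (Fin m) (Fin k) ℝ) (i : Fin m) (j : Fin k) :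
    (diagonal s * M) i j / rowNorm (diagonal s * M) i = M i j / rowNorm M i := by
  have hrow : rowNorm (diagonal s * M) i = s i * rowNorm M i := by
    simp only [rowNorm, diagonal_mul, mul_pow, ← Finset.mul_sum]
    rw [Real.sqrt_mul (sq_nonneg _), Real.sqrt_sq (hs i).le]
  rw [hrow, diagonal_mul, mul_div_mul_left _ _ (hs i).ne']

variable {B N : Matrix (Fin k) (Fin k) ℝ} {c₁ c₂ : ℝ}

lemma le_rowNorm_sq (hc₁ : 0 < c₁) (hlo : ∀ y, c₁ * (y ⬝ᵥ y) ≤ (B *ᵥ y) ⬝ᵥ (B *ᵥ y))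
    (i : Fin k) : c₁ ≤ rowNorm B i ^ 2 := by
  simpa [rowNorm_sq, Matrix.row] using
    Matrix.le_transpose_mulVec_dotProduct hc₁ hlo (Pi.single i 1)

lemma rowNorm_sq_le (hc₂ : 0 ≤ c₂) (hup : ∀ y, (B *ᵥ y) ⬝ᵥ (B *ᵥ y) ≤ c₂ * (y ⬝ᵥ y))
    (i : Fin k) : rowNorm B i ^ 2 ≤ c₂ := by
  simpa [rowNorm_sq, Matrix.row] using
    Matrix.transpose_mulVec_dotProduct_le hc₂ hup (Pi.single i 1)

lemma dotProduct_self_row_of_div_rowNorm (hN : ∀ i j, N i j = B i j / rowNorm B i)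
    {i : Fin k} (hi : rowNorm B i ≠ 0) : N i ⬝ᵥ N i = 1 := by
  have hNi : N i = (rowNorm B i)⁻¹ • B i := funext fun j => by
    rw [hN, Pi.smul_apply, smul_eq_mul, inv_mul_eq_div]
  rw [hNi, dotProduct_smul, smul_dotProduct, ← rowNorm_sq, smul_eq_mul, smul_eq_mul]
  field_simp

lemma transpose_mulVec_of_div_rowNorm (hN : ∀ i j, N i j = B i j / rowNorm B i)
    (x : Fin k → ℝ) : Nᵀ *ᵥ x = Bᵀ *ᵥ fun i => x i / rowNorm B i := by
  ext j
  simp only [mulVec, dotProduct, transpose_apply, hN]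
  exact Finset.sum_congr rfl fun i _ => by ring

variable [NeZero k]

lemma iSup_eigenvalues_le_of_div_rowNorm (hNN : (N * Nᵀ).IsHermitian)
    (hN : ∀ i j, N i j = B i j / rowNorm B i) (hB : ∀ i, rowNorm B i ≠ 0) :
    ⨆ i, hNN.eigenvalues i ≤ k :=
  hNN.iSup_eigenvalues_le fun x => by
    rw [Matrix.dotProduct_mulVec_mul_transpose]
    simpa [dotProduct_self_row_of_div_rowNorm hN (hB _)] using
      Matrix.transpose_mulVec_dotProduct_le_sum N x

lemma div_le_iInf_eigenvalues_of_div_rowNorm (hNN : (N * Nᵀ).IsHermitian)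
    (hN : ∀ i j, N i j = B i j / rowNorm B i) (hc₁ : 0 < c₁)
    (hlo : ∀ y, c₁ * (y ⬝ᵥ y) ≤ (B *ᵥ y) ⬝ᵥ (B *ᵥ y))
    (hup : ∀ y, (B *ᵥ y) ⬝ᵥ (B *ᵥ y) ≤ c₂ * (y ⬝ᵥ y)) :
    c₁ / c₂ ≤ ⨅ i, hNN.eigenvalues i := by
  have hrow_lo := le_rowNorm_sq hc₁ hlo
  have hc₂ : 0 < c₂ := by
    have h := (hlo (Pi.single 0 1)).trans (hup (Pi.single 0 1))
    simp only [single_one_dotProduct, Pi.single_eq_same, mul_one] at h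
    exact hc₁.trans_le h
  refine hNN.le_iInf_eigenvalues fun x => ?_
  rw [Matrix.dotProduct_mulVec_mul_transpose, transpose_mulVec_of_div_rowNorm hN]
  refine le_trans ?_ (Matrix.le_transpose_mulVec_dotProduct hc₁ hlo _)
  rw [div_mul_eq_mul_div, div_le_iff₀ hc₂, mul_assoc]
  refine mul_le_mul_of_nonneg_left ?_ hc₁.le
  simp only [dotProduct, Finset.sum_mul]
  refine Finset.sum_le_sum fun i _ => ?_
  have hi : 0 < rowNorm B i ^ 2 := hc₁.trans_le (hrow_lo i)
  rw [← sq, ← sq, div_pow, div_mul_eq_mul_div, le_div_iff₀ hi]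
  exact mul_le_mul_of_nonneg_left (rowNorm_sq_le hc₂.le hup i) (sq_nonneg _)

end

theorem stmt_10_general
    {n K : ℕ} (hK : 0 < K)
    (Pi : Matrix (Fin n) (Fin K) ℝ)
    (Pt : Matrix (Fin K) (Fin K) ℝ)
    (ρ τ : ℝ)
    (Om : Matrix (Fin n) (Fin n) ℝ) (hOm : Om = Pi * (ρ • Pt) * Piᵀ)
    (deg : Fin n → ℝ)
    (hpos : ∀ i, 0 < deg i + τ)
    (Ltau : Matrix (Fin n) (Fin n) ℝ)
    (hLtau : Ltau = Matrix.diagonal (fun i => (Real.sqrt (deg i + τ))⁻¹) * Om *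
      Matrix.diagonal (fun i => (Real.sqrt (deg i + τ))⁻¹))
    (Idx : Fin K → Fin n) (hIdx : Pi.submatrix Idx id = 1)
    (V : Matrix (Fin n) (Fin K) ℝ) (e : Fin K → ℝ)
    (hVorth : Vᵀ * V = 1) (he : ∀ k, e k ≠ 0)
    (hVE : Ltau = V * Matrix.diagonal e * Vᵀ)
    (Vtau1 : Matrix (Fin n) (Fin K) ℝ)
    (hVtau1 : Vtau1 = Matrix.diagonal (fun i => Real.sqrt (deg i + τ)) * V)
    (Vstar1 : Matrix (Fin n) (Fin K) ℝ)
    (hVstar1 : ∀ i k, Vstar1 i k = V i k / rowNorm V i)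
    (hH : (Piᵀ * Pi).IsHermitian)
    (hH1 : ((Vtau1.submatrix Idx id) * (Vtau1.submatrix Idx id)ᵀ).IsHermitian)
    (hH2 : ((Vstar1.submatrix Idx id) * (Vstar1.submatrix Idx id)ᵀ).IsHermitian) :
    (⨆ k, hH1.eigenvalues k) ≤ (τ + ⨆ j, deg j) / (⨅ k, hH.eigenvalues k) ∧
    (τ + ⨅ j, deg j) / (⨆ k, hH.eigenvalues k) ≤ (⨅ k, hH1.eigenvalues k) ∧
    (⨆ k, hH2.eigenvalues k) ≤ (K : ℝ) * ((τ + ⨆ j, deg j) / (τ + ⨅ j, deg j)) *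
      ((⨆ k, hH.eigenvalues k) / (⨅ k, hH.eigenvalues k)) ∧
    ((τ + ⨅ j, deg j) / (τ + ⨆ j, deg j)) *
        ((⨆ k, hH.eigenvalues k) / (⨅ k, hH.eigenvalues k))⁻¹ ≤
      (⨅ k, hH2.eigenvalues k) := by
  have : Nonempty (Fin n) := ⟨Idx ⟨0, hK⟩⟩
  have : NeZero K := ⟨hK.ne'⟩
  have hdeg_lo : ∀ i, τ + ⨅ j, deg j ≤ deg i + τ := fun i => by
    linarith [ciInf_le (Set.finite_range deg).bddBelow i]
  have hdeg_hi : ∀ i, deg i + τ ≤ τ + ⨆ j, deg j := fun i => by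
    linarith [le_ciSup (Set.finite_range deg).bddAbove i]
  obtain ⟨i₀, hi₀⟩ := exists_eq_ciInf_of_finite (f := deg)
  have hdmin : 0 < τ + ⨅ j, deg j := by linarith [hpos i₀]
  have hdd : τ + ⨅ j, deg j ≤ τ + ⨆ j, deg j := (hdeg_lo i₀).trans (hdeg_hi i₀)
  have hlamK :=
    iInf_eigenvalues_transpose_mul_self_pos (mulVec_injective_of_submatrix_eq_one hIdx) hH
  have hlam : (⨅ k, hH.eigenvalues k) ≤ ⨆ k, hH.eigenvalues k :=
    ciInf_le_ciSup (Set.finite_range _).bddBelow (Set.finite_range _).bddAbove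
  have hsqrt : ∀ i, 0 < √(deg i + τ) := fun i => Real.sqrt_pos.2 (hpos i)
  have hfac : Vtau1 = Pi * Vtau1.submatrix Idx id := by
    rw [hVtau1]
    exact diagonal_mul_eq_mul_submatrix_of_eq_mul_diagonal_mul_transpose hIdx
      (fun i => (hsqrt i).ne') he hVorth (by rw [← hOm, ← hLtau, hVE])
  have hN : ∀ k j, Vstar1.submatrix Idx id k j =
      Vtau1.submatrix Idx id k j / rowNorm (Vtau1.submatrix Idx id) k := fun k j => by
    rw [submatrix_apply, hVstar1, id, ← div_rowNorm_diagonal_mul hsqrt V, hVtau1]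
    rfl
  have hup := dotProduct_mulVec_le_div_iInf_eigenvalues hH hlamK fun y => by
    rw [← hfac, hVtau1]
    exact diagonal_sqrt_mul_mulVec_le_mul_dotProduct hVorth (fun i => (hpos i).le) hdeg_hi y
  have hlo := div_iSup_eigenvalues_mul_le_dotProduct_mulVec hH (hlamK.trans_le hlam) fun y => by
    rw [← hfac, hVtau1]
    exact mul_dotProduct_le_diagonal_sqrt_mul_mulVec hVorth hdmin.le hdeg_lo y
  have hc : 0 < (τ + ⨅ j, deg j) / (⨆ k, hH.eigenvalues k) := div_pos hdmin (hlamK.trans_le hlam)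
  refine ⟨iSup_eigenvalues_mul_transpose_le hH1 (div_pos (hdmin.trans_le hdd) hlamK).le hup,
    le_iInf_eigenvalues_mul_transpose hH1 hc hlo, ?_, ?_⟩
  · refine (iSup_eigenvalues_le_of_div_rowNorm hH2 hN fun k hk => ?_).trans ?_
    · simpa [hk] using hc.trans_le (le_rowNorm_sq hc hlo k)
    rw [mul_assoc]
    exact le_mul_of_one_le_right K.cast_nonneg
      (one_le_mul_of_one_le_of_one_le ((one_le_div hdmin).2 hdd) ((one_le_div hlamK).2 hlam))
  · convert div_le_iInf_eigenvalues_of_div_rowNorm hH2 hN hc hlo hup using 1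
    field_simp

/-- Lemma B.3: eigenvalue bounds for `V_{τ,1}(𝓘,:) V_{τ,1}(𝓘,:)'` and
`V_{*,1}(𝓘,:) V_{*,1}(𝓘,:)'` in terms of `τ`, `δ_min`, `δ_max`, `K`, the extreme eigenvalues of
`Π'Π` and its condition number `κ(Π'Π)`. -/
theorem stmt_10
    {n K : ℕ} (hn : 0 < n) (hK : 0 < K) (hKn : K ≤ n)
    (Pi : Matrix (Fin n) (Fin K) ℝ)
    (hPi_nonneg : ∀ i k, 0 ≤ Pi i k)
    (hPi_rowsum : ∀ i, ∑ k, Pi i k = 1)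
    (hPi_rank : Pi.rank = K)
    (hpure : ∀ k : Fin K, ∃ i : Fin n, ∀ l, Pi i l = if l = k then 1 else 0)
    (Pt : Matrix (Fin K) (Fin K) ℝ)
    (hPt_symm : Pt.IsSymm)
    (hPt_nonneg : ∀ k l, 0 ≤ Pt k l)
    (hPt_rank : Pt.rank = K)
    (hPt_le_one : ∀ k l, Pt k l ≤ 1)
    (hPt_max : ∃ k l, Pt k l = 1)
    (ρ τ : ℝ) (hρ0 : 0 < ρ) (hρ1 : ρ ≤ 1) (hτ : 0 ≤ τ)
    (Om : Matrix (Fin n) (Fin n) ℝ) (hOm : Om = Pi * (ρ • Pt) * Piᵀ)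
    (deg : Fin n → ℝ) (hdeg : ∀ i, deg i = ∑ j, Om i j)
    (hpos : ∀ i, 0 < deg i + τ)
    (Ltau : Matrix (Fin n) (Fin n) ℝ)
    (hLtau : Ltau = Matrix.diagonal (fun i => (Real.sqrt (deg i + τ))⁻¹) * Om *
      Matrix.diagonal (fun i => (Real.sqrt (deg i + τ))⁻¹))
    (Idx : Fin K → Fin n) (hIdx : Pi.submatrix Idx id = 1)
    (V : Matrix (Fin n) (Fin K) ℝ) (e : Fin K → ℝ)
    (hVorth : Vᵀ * V = 1) (he : ∀ k, e k ≠ 0)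
    (hVE : Ltau = V * Matrix.diagonal e * Vᵀ)
    (hVrow : ∀ i, V i ≠ 0)
    (Vtau1 : Matrix (Fin n) (Fin K) ℝ)
    (hVtau1 : Vtau1 = Matrix.diagonal (fun i => Real.sqrt (deg i + τ)) * V)
    (Vstar1 : Matrix (Fin n) (Fin K) ℝ)
    (hVstar1 : ∀ i k, Vstar1 i k = V i k / rowNorm V i)
    (hH : (Piᵀ * Pi).IsHermitian)
    (hH1 : ((Vtau1.submatrix Idx id) * (Vtau1.submatrix Idx id)ᵀ).IsHermitian)
    (hH2 : ((Vstar1.submatrix Idx id) * (Vstar1.submatrix Idx id)ᵀ).IsHermitian) :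
    (⨆ k, hH1.eigenvalues k) ≤ (τ + ⨆ j, deg j) / (⨅ k, hH.eigenvalues k) ∧
    (τ + ⨅ j, deg j) / (⨆ k, hH.eigenvalues k) ≤ (⨅ k, hH1.eigenvalues k) ∧
    (⨆ k, hH2.eigenvalues k) ≤ (K : ℝ) * ((τ + ⨆ j, deg j) / (τ + ⨅ j, deg j)) *
      ((⨆ k, hH.eigenvalues k) / (⨅ k, hH.eigenvalues k)) ∧
    ((τ + ⨅ j, deg j) / (τ + ⨆ j, deg j)) *
        ((⨆ k, hH.eigenvalues k) / (⨅ k, hH.eigenvalues k))⁻¹ ≤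
      (⨅ k, hH2.eigenvalues k) :=
  stmt_10_general hK Pi Pt ρ τ Om hOm deg hpos Ltau hLtau Idx hIdx V e hVorth he hVE Vtau1 hVtau1
    Vstar1 hVstar1 hH hH1 hH2
end

section
/- Under the MMSB setup, the eigenvalues λ_1, …, λ_K of 𝓛_τ (ordered by decreasing magnitude) satisfy |λ_K| ≥ ρ |λ_K(P̃)| λ_K(Π'Π) / (τ + δ_max) and λ_1 = ‖𝓛_τ‖ ≤ δ_max / (τ + δ_max), where λ_K(P̃) is the smallest-in-magnitude eigenvalue of P̃ and λ_K(Π'Π) is the smallest eigenvalue of Π'Π. -/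
open Matrix BigOperators

/-- Spectral (operator ℓ₂) norm of a square real matrix. -/
noncomputable def specNorm {m : ℕ} (A : Matrix (Fin m) (Fin m) ℝ) : ℝ :=
  ‖Matrix.toEuclideanCLM (𝕜 := ℝ) A‖

/-!
Write `𝓛_τ = B (ρP̃) Bᵀ` with `B = 𝒟_τ^{-1/2} Π`. If `𝓛_τ x = λ x` with `λ ≠ 0`, then
`u = λ⁻¹ ρP̃ Bᵀ x` satisfies `B u = x` and `ρP̃ (BᵀB u) = λ u`. Since
`‖ρP̃ w‖ ≥ ρ |λ_K(P̃)| ‖w‖` and `⟪u, BᵀB u⟫ = ‖B u‖² ≥ λ_K(Π'Π) ‖u‖² / (τ + δ_max)`, this forces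
`|λ| ≥ ρ |λ_K(P̃)| λ_K(Π'Π) / (τ + δ_max)`.

For the upper bound, `𝒟_τ⁻¹ Ω` is similar to `𝓛_τ` and has nonnegative rows with sums
`𝒟(i,i) / (𝒟(i,i) + τ) ≤ δ_max / (τ + δ_max)`, so Gershgorin's theorem bounds every eigenvalue.
Finally `‖V diag(e) Vᵀ‖ = max_k |e_k|` because `V` has orthonormal columns.
-/

open scoped RealInnerProductSpace

namespace Matrix.IsHermitian

variable {ι : Type*} [Fintype ι] [DecidableEq ι] {A : Matrix ι ι ℝ} (hA : A.IsHermitian)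

theorem toEuclideanLin_eigenvectorBasis (j : ι) :
    toEuclideanLin A (hA.eigenvectorBasis j) = hA.eigenvalues j • hA.eigenvectorBasis j := by
  rw [toLpLin_apply, hA.mulVec_eigenvectorBasis]
  rfl

theorem inner_eigenvectorBasis_toEuclideanLin (j : ι) (x : EuclideanSpace ℝ ι) :
    ⟪hA.eigenvectorBasis j, toEuclideanLin A x⟫ =
      hA.eigenvalues j * ⟪hA.eigenvectorBasis j, x⟫ := by
  rw [← isSymmetric_toEuclideanLin_iff.mpr hA, hA.toEuclideanLin_eigenvectorBasis,
    real_inner_smul_left]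

theorem mul_norm_sq_le_inner_toEuclideanLin {c : ℝ} (hc : ∀ i, c ≤ hA.eigenvalues i)
    (x : EuclideanSpace ℝ ι) : c * ‖x‖ ^ 2 ≤ ⟪x, toEuclideanLin A x⟫ := by
  set b := hA.eigenvectorBasis
  rw [← b.sum_sq_inner_right x, ← b.sum_inner_mul_inner x, Finset.mul_sum]
  refine Finset.sum_le_sum fun i _ => ?_
  rw [hA.inner_eigenvectorBasis_toEuclideanLin, real_inner_comm]
  nlinarith [hc i, sq_nonneg ⟪b i, x⟫]

theorem mul_norm_le_norm_toEuclideanLin {c : ℝ} (hc₀ : 0 ≤ c)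
    (hc : ∀ i, c ≤ |hA.eigenvalues i|) (x : EuclideanSpace ℝ ι) :
    c * ‖x‖ ≤ ‖toEuclideanLin A x‖ := by
  set b := hA.eigenvectorBasis
  refine (pow_le_pow_iff_left₀ (by positivity) (norm_nonneg _) two_ne_zero).mp ?_
  rw [mul_pow, ← b.sum_sq_inner_right x, ← b.sum_sq_inner_right, Finset.mul_sum]
  refine Finset.sum_le_sum fun i _ => ?_
  rw [hA.inner_eigenvectorBasis_toEuclideanLin, mul_pow, ← sq_abs (hA.eigenvalues i)]
  gcongr
  exact hc i

end Matrix.IsHermitian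

section

variable {E F : Type*} [NormedAddCommGroup E] [InnerProductSpace ℝ E] [FiniteDimensional ℝ E]
  [NormedAddCommGroup F] [InnerProductSpace ℝ F] [FiniteDimensional ℝ F]

theorem LinearMap.mul_le_abs_of_apply_adjoint_eq_smul (B : F →ₗ[ℝ] E) (M : F →ₗ[ℝ] F)
    {μ α c : ℝ} {x : E} (hx : x ≠ 0) (hμ : μ ≠ 0) (hα : 0 ≤ α)
    (hM : ∀ w, α * ‖w‖ ≤ ‖M w‖) (hB : ∀ u, c * ‖u‖ ^ 2 ≤ ‖B u‖ ^ 2)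
    (hx_eig : B (M (B.adjoint x)) = μ • x) : α * c ≤ |μ| := by
  set z := B.adjoint x
  set u := μ⁻¹ • M z
  have hBu : B u = x := by rw [map_smul, hx_eig, inv_smul_smul₀ hμ]
  have hMz : M z = μ • u := by rw [smul_inv_smul₀ hμ]
  have hu : 0 < ‖u‖ := norm_pos_iff.mpr fun h => hx (by rw [← hBu, h, map_zero])
  have hz : c * ‖u‖ ≤ ‖z‖ := by
    refine le_of_mul_le_mul_left ?_ hu
    calc ‖u‖ * (c * ‖u‖) = c * ‖u‖ ^ 2 := by ring
      _ ≤ ‖B u‖ ^ 2 := hB u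
      _ = ⟪u, z⟫ := by rw [LinearMap.adjoint_inner_right, hBu, real_inner_self_eq_norm_sq]
      _ ≤ ‖u‖ * ‖z‖ := real_inner_le_norm u z
  refine le_of_mul_le_mul_right ?_ hu
  calc α * c * ‖u‖ = α * (c * ‖u‖) := mul_assoc ..
    _ ≤ α * ‖z‖ := mul_le_mul_of_nonneg_left hz hα
    _ ≤ ‖M z‖ := hM z
    _ = |μ| * ‖u‖ := by rw [hMz, norm_smul, Real.norm_eq_abs]

end

namespace Matrix

theorem mul_apply_nonneg {m n p : Type*} [Fintype n] {A : Matrix m n ℝ} {B : Matrix n p ℝ}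
    (hA : ∀ i j, 0 ≤ A i j) (hB : ∀ i j, 0 ≤ B i j) (i : m) (j : p) : 0 ≤ (A * B) i j :=
  Finset.sum_nonneg fun k _ => mul_nonneg (hA i k) (hB k j)

variable {m ι : Type*} [Fintype m] [DecidableEq m] [Fintype ι] [DecidableEq ι]

theorem norm_toEuclideanLin_sq (B : Matrix m ι ℝ) (u : EuclideanSpace ℝ ι) :
    ‖toEuclideanLin B u‖ ^ 2 = ⟪u, toEuclideanLin (Bᵀ * B) u⟫ := by
  rw [toLpLin_mul_same, LinearMap.comp_apply, ← conjTranspose_eq_transpose_of_trivial,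
    toEuclideanLin_conjTranspose_eq_adjoint, LinearMap.adjoint_inner_right,
    real_inner_self_eq_norm_sq]

theorem mul_norm_sq_le_norm_toEuclideanLin_diagonal_sq {s : ι → ℝ} {c : ℝ}
    (hs : ∀ i, c ≤ s i ^ 2) (v : EuclideanSpace ℝ ι) :
    c * ‖v‖ ^ 2 ≤ ‖toEuclideanLin (diagonal s) v‖ ^ 2 := by
  simp only [EuclideanSpace.real_norm_sq_eq, Finset.mul_sum, toLpLin_apply, mulVec_diagonal]
  refine Finset.sum_le_sum fun i _ => ?_
  rw [mul_pow]
  exact mul_le_mul_of_nonneg_right (hs i) (sq_nonneg _)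

theorem exists_norm_eq_one_toEuclideanLin_mul_diagonal_mul_transpose {V : Matrix m ι ℝ}
    (hV : Vᵀ * V = 1) (e : ι → ℝ) (k : ι) :
    ∃ x : EuclideanSpace ℝ m, ‖x‖ = 1 ∧ toEuclideanLin (V * diagonal e * Vᵀ) x = e k • x := by
  refine ⟨toEuclideanLin V (EuclideanSpace.single k 1), ?_, ?_⟩
  · rw [← pow_eq_one_iff_of_nonneg (norm_nonneg _) two_ne_zero, norm_toEuclideanLin_sq, hV,
      toLpLin_one, LinearMap.id_apply, real_inner_self_eq_norm_sq, PiLp.norm_single, norm_one,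
      one_pow]
  · have hdiag : toEuclideanLin (diagonal e) (EuclideanSpace.single k 1) =
        e k • EuclideanSpace.single k (1 : ℝ) := by
      ext i
      by_cases hik : i = k <;> simp [toLpLin_apply, hik]
    simp only [toLpLin_mul_same, LinearMap.comp_apply]
    rw [← LinearMap.comp_apply (toEuclideanLin Vᵀ), ← toLpLin_mul_same, hV, toLpLin_one,
      LinearMap.id_apply, hdiag, map_smul]

theorem norm_le_of_hasEigenvalue_of_sum_norm_le {K : Type*} [NormedField K]
    {A : Matrix ι ι K} {μ : K} {r : ℝ} (hμ : Module.End.HasEigenvalue (toLin' A) μ)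
    (hA : ∀ i, ∑ j, ‖A i j‖ ≤ r) : ‖μ‖ ≤ r := by
  obtain ⟨k, hk⟩ := eigenvalue_mem_ball hμ
  rw [mem_closedBall_iff_norm] at hk
  calc ‖μ‖ ≤ ‖A k k‖ + ‖μ - A k k‖ := norm_le_insert' μ (A k k)
    _ ≤ ‖A k k‖ + ∑ j ∈ Finset.univ.erase k, ‖A k j‖ := by gcongr
    _ = ∑ j, ‖A k j‖ := Finset.add_sum_erase _ (fun j => ‖A k j‖) (Finset.mem_univ k)
    _ ≤ r := hA k

theorem hasEigenvalue_diagonal_mul_diagonal_mul {K : Type*} [Field K] {A : Matrix ι ι K}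
    {d : ι → K} (hd : ∀ i, d i ≠ 0) {x : ι → K} (hx : x ≠ 0) {μ : K}
    (h : (diagonal d * A * diagonal d) *ᵥ x = μ • x) :
    Module.End.HasEigenvalue (toLin' (diagonal d * diagonal d * A)) μ := by
  refine Module.End.hasEigenvalue_of_hasEigenvector (x := diagonal d *ᵥ x) ⟨?_, ?_⟩
  · have hassoc : diagonal d * diagonal d * A * diagonal d =
        diagonal d * (diagonal d * A * diagonal d) := by simp only [Matrix.mul_assoc]
    rw [Module.End.mem_eigenspace_iff, toLin'_apply, mulVec_mulVec, hassoc, ← mulVec_mulVec, h,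
      mulVec_smul]
  · intro h0
    refine hx (funext fun i => ?_)
    have := congrFun h0 i
    rw [mulVec_diagonal, Pi.zero_apply] at this
    exact (mul_eq_zero.mp this).resolve_left (hd i)

theorem abs_le_of_toEuclideanLin_diagonal_mul_mul_diagonal_eq_smul {A : Matrix ι ι ℝ}
    (hA : ∀ i j, 0 ≤ A i j) {s : ι → ℝ} (hs : ∀ i, s i ≠ 0) {r : ℝ}
    (hr : ∀ i, s i ^ 2 * ∑ j, A i j ≤ r) {x : EuclideanSpace ℝ ι} (hx : x ≠ 0) {μ : ℝ}
    (h : toEuclideanLin (diagonal s * A * diagonal s) x = μ • x) : |μ| ≤ r := by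
  refine norm_le_of_hasEigenvalue_of_sum_norm_le
    (hasEigenvalue_diagonal_mul_diagonal_mul hs (x := WithLp.ofLp x) (by simpa using hx)
      (congrArg WithLp.ofLp h)) fun i => ?_
  simp only [diagonal_mul_diagonal, diagonal_mul, Real.norm_eq_abs]
  calc ∑ j, |s i * s i * A i j| = s i ^ 2 * ∑ j, A i j := by
        rw [Finset.mul_sum]
        exact Finset.sum_congr rfl fun j _ => by
          rw [abs_of_nonneg (mul_nonneg (mul_self_nonneg _) (hA i j)), sq]
    _ ≤ r := hr i

theorem mul_le_abs_of_toEuclideanLin_mul_mul_transpose_eq_smul (B : Matrix m ι ℝ)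
    (M : Matrix ι ι ℝ) {μ α c : ℝ} {x : EuclideanSpace ℝ m} (hx : x ≠ 0) (hμ : μ ≠ 0)
    (hα : 0 ≤ α) (hM : ∀ w, α * ‖w‖ ≤ ‖toEuclideanLin M w‖)
    (hB : ∀ u, c * ‖u‖ ^ 2 ≤ ‖toEuclideanLin B u‖ ^ 2)
    (h : toEuclideanLin (B * M * Bᵀ) x = μ • x) : α * c ≤ |μ| := by
  refine LinearMap.mul_le_abs_of_apply_adjoint_eq_smul _ _ hx hμ hα hM hB ?_
  rwa [← conjTranspose_eq_transpose_of_trivial, toLpLin_mul_same, toLpLin_mul_same,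
    toEuclideanLin_conjTranspose_eq_adjoint] at h

theorem mul_mul_div_le_abs_of_toEuclideanLin_diagonal_mul_mul_diagonal_eq_smul
    {P : Matrix m ι ℝ} {M : Matrix ι ι ℝ} (hM : M.IsHermitian) (hP : (Pᵀ * P).IsHermitian)
    {ρ D : ℝ} (hρ : 0 ≤ ρ) (hD : 0 ≤ D) {s : m → ℝ} (hs : ∀ i, D⁻¹ ≤ s i ^ 2)
    {x : EuclideanSpace ℝ m} (hx : x ≠ 0) {μ : ℝ} (hμ : μ ≠ 0)
    (h : toEuclideanLin (diagonal s * (P * (ρ • M) * Pᵀ) * diagonal s) x = μ • x) :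
    ρ * (⨅ l, |hM.eigenvalues l|) * (⨅ l, hP.eigenvalues l) / D ≤ |μ| := by
  have ha : 0 ≤ ⨅ l, |hM.eigenvalues l| := Real.iInf_nonneg fun l => abs_nonneg _
  have hM_bound :
      ∀ w, ρ * (⨅ l, |hM.eigenvalues l|) * ‖w‖ ≤ ‖toEuclideanLin (ρ • M) w‖ := by
    intro w
    rw [map_smul, LinearMap.smul_apply, norm_smul, Real.norm_of_nonneg hρ, mul_assoc]
    exact mul_le_mul_of_nonneg_left (hM.mul_norm_le_norm_toEuclideanLin ha
      (fun l => ciInf_le (Set.finite_range _).bddBelow l) w) hρ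
  have hB_bound : ∀ u, (⨅ l, hP.eigenvalues l) / D * ‖u‖ ^ 2 ≤
      ‖toEuclideanLin (diagonal s * P) u‖ ^ 2 := by
    intro u
    calc (⨅ l, hP.eigenvalues l) / D * ‖u‖ ^ 2
      _ = D⁻¹ * ((⨅ l, hP.eigenvalues l) * ‖u‖ ^ 2) := by ring
      _ ≤ D⁻¹ * ‖toEuclideanLin P u‖ ^ 2 := by
          rw [norm_toEuclideanLin_sq]
          gcongr
          exact hP.mul_norm_sq_le_inner_toEuclideanLin
            (fun l => ciInf_le (Set.finite_range _).bddBelow l) u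
      _ ≤ ‖toEuclideanLin (diagonal s * P) u‖ ^ 2 := by
          rw [toLpLin_mul_same]
          exact mul_norm_sq_le_norm_toEuclideanLin_diagonal_sq hs _
  have hfactor : diagonal s * (P * (ρ • M) * Pᵀ) * diagonal s =
      (diagonal s * P) * (ρ • M) * (diagonal s * P)ᵀ := by
    rw [transpose_mul, diagonal_transpose]
    simp only [Matrix.mul_assoc]
  rw [mul_div_assoc]
  exact mul_le_abs_of_toEuclideanLin_mul_mul_transpose_eq_smul _ _ hx hμ (mul_nonneg hρ ha)
    hM_bound hB_bound (hfactor ▸ h)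

end Matrix

open scoped Matrix.Norms.L2Operator in
theorem specNorm_mul_diagonal_mul_transpose {n K : ℕ} {V : Matrix (Fin n) (Fin K) ℝ}
    (hV : Vᵀ * V = 1) (e : Fin K → ℝ) : specNorm (V * diagonal e * Vᵀ) = ⨆ k, |e k| := by
  refine le_antisymm ?_ (Real.iSup_le (fun k => ?_) (norm_nonneg _))
  · have hV_le : ‖V‖ ≤ 1 := by
      have : ‖V‖ * ‖V‖ ≤ 1 := by
        rw [← l2_opNorm_conjTranspose_mul_self, conjTranspose_eq_transpose_of_trivial, hV,
          ← l2_opNorm_toEuclideanCLM, map_one]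
        exact ContinuousLinearMap.norm_id_le
      nlinarith [norm_nonneg V]
    have he : ‖e‖ ≤ ⨆ k, |e k| :=
      (pi_norm_le_iff_of_nonneg (Real.iSup_nonneg fun k => abs_nonneg (e k))).2 fun k =>
        le_ciSup (f := fun k => |e k|) (Set.finite_range _).bddAbove k
    calc specNorm (V * diagonal e * Vᵀ) = ‖V * diagonal e * Vᵀ‖ := rfl
      _ ≤ ‖V‖ * ‖diagonal e‖ * ‖Vᵀ‖ :=
        (l2_opNorm_mul _ _).trans <|
          mul_le_mul_of_nonneg_right (l2_opNorm_mul _ _) (norm_nonneg _)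
      _ ≤ 1 * ‖e‖ * 1 := by
        rw [l2_opNorm_diagonal, ← conjTranspose_eq_transpose_of_trivial, l2_opNorm_conjTranspose]
        gcongr
      _ ≤ ⨆ k, |e k| := by rwa [one_mul, mul_one]
  · obtain ⟨x, hx_norm, hx⟩ :=
      exists_norm_eq_one_toEuclideanLin_mul_diagonal_mul_transpose hV e k
    calc |e k| = ‖toEuclideanCLM (𝕜 := ℝ) (V * diagonal e * Vᵀ) x‖ := by
          rw [← Real.norm_eq_abs, ← mul_one ‖e k‖, ← hx_norm, ← norm_smul, ← hx]; rfl
      _ ≤ specNorm (V * diagonal e * Vᵀ) * ‖x‖ := ContinuousLinearMap.le_opNorm _ _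
      _ = specNorm (V * diagonal e * Vᵀ) := by rw [hx_norm, mul_one]

theorem stmt_11_general
    {n K : ℕ} (hK : 0 < K)
    (Pi : Matrix (Fin n) (Fin K) ℝ)
    (hPi_nonneg : ∀ i k, 0 ≤ Pi i k)
    (Pt : Matrix (Fin K) (Fin K) ℝ)
    (hPt_nonneg : ∀ k l, 0 ≤ Pt k l)
    (ρ τ : ℝ) (hρ0 : 0 < ρ) (hτ : 0 ≤ τ)
    (Om : Matrix (Fin n) (Fin n) ℝ) (hOm : Om = Pi * (ρ • Pt) * Piᵀ)
    (deg : Fin n → ℝ) (hdeg : ∀ i, deg i = ∑ j, Om i j)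
    (hpos : ∀ i, 0 < deg i + τ)
    (Ltau : Matrix (Fin n) (Fin n) ℝ)
    (hLtau : Ltau = Matrix.diagonal (fun i => (Real.sqrt (deg i + τ))⁻¹) * Om *
      Matrix.diagonal (fun i => (Real.sqrt (deg i + τ))⁻¹))
    (V : Matrix (Fin n) (Fin K) ℝ) (e : Fin K → ℝ)
    (hVorth : Vᵀ * V = 1) (he : ∀ k, e k ≠ 0)
    (hVE : Ltau = V * Matrix.diagonal e * Vᵀ)
    (hPtHerm : Pt.IsHermitian)
    (hH : (Piᵀ * Pi).IsHermitian) :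
    ρ * (⨅ l, |hPtHerm.eigenvalues l|) * (⨅ m, hH.eigenvalues m) / (τ + ⨆ j, deg j) ≤
      (⨅ k, |e k|) ∧
    (⨆ k, |e k|) = specNorm Ltau ∧
    specNorm Ltau ≤ (⨆ j, deg j) / (τ + ⨆ j, deg j) := by
  have : Nonempty (Fin K) := ⟨⟨0, hK⟩⟩
  set δ := ⨆ j, deg j
  have hOm_nonneg : ∀ i j, 0 ≤ Om i j := by
    rw [hOm]
    exact mul_apply_nonneg (mul_apply_nonneg hPi_nonneg fun k l =>
      mul_nonneg hρ0.le (hPt_nonneg k l)) fun k i => hPi_nonneg i k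
  have hdeg_nonneg : ∀ i, 0 ≤ deg i := fun i =>
    hdeg i ▸ Finset.sum_nonneg fun j _ => hOm_nonneg i j
  have hdeg_le : ∀ i, deg i ≤ δ := fun i => le_ciSup (Set.finite_range deg).bddAbove i
  have hδ : 0 ≤ δ := Real.iSup_nonneg hdeg_nonneg
  have hs_sq : ∀ i, (√(deg i + τ))⁻¹ ^ 2 = (deg i + τ)⁻¹ := fun i => by
    rw [inv_pow, Real.sq_sqrt (hpos i).le]
  have hnorm : specNorm Ltau = ⨆ k, |e k| := hVE ▸ specNorm_mul_diagonal_mul_transpose hVorth e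
  choose x hx_norm hx_eig using
    exists_norm_eq_one_toEuclideanLin_mul_diagonal_mul_transpose hVorth e
  have hx : ∀ k, x k ≠ 0 := fun k => norm_ne_zero_iff.mp (by rw [hx_norm]; exact one_ne_zero)
  refine ⟨le_ciInf fun k => ?_, hnorm.symm,
    hnorm ▸ Real.iSup_le (fun k => ?_) (div_nonneg hδ (by linarith))⟩
  · refine mul_mul_div_le_abs_of_toEuclideanLin_diagonal_mul_mul_diagonal_eq_smul hPtHerm hH
      hρ0.le (by linarith) (fun i => ?_) (hx k) (he k) (hOm ▸ hLtau ▸ hVE ▸ hx_eig k)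
    rw [hs_sq]
    exact inv_anti₀ (hpos i) (by linarith [hdeg_le i])
  · refine abs_le_of_toEuclideanLin_diagonal_mul_mul_diagonal_eq_smul hOm_nonneg
      (fun i => (inv_pos.2 (Real.sqrt_pos.2 (hpos i))).ne') (fun i => ?_) (hx k)
      (hLtau ▸ hVE ▸ hx_eig k)
    rw [← hdeg, hs_sq, inv_mul_eq_div, div_le_div_iff₀ (hpos i) (by linarith [hpos i, hdeg_le i])]
    linarith [mul_le_mul_of_nonneg_right (hdeg_le i) hτ]

/-- Lemma B.4: the eigenvalues of `𝓛_τ` satisfy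
`|λ_K| ≥ ρ |λ_K(P̃)| λ_K(Π'Π) / (τ+δ_max)` and `λ₁ = ‖𝓛_τ‖ ≤ δ_max/(τ+δ_max)`, where the
eigenvalues are ordered by decreasing magnitude (so `|λ_K| = min_k |e k|` and
`λ₁ = max_k |e k|`). -/
theorem stmt_11
    {n K : ℕ} (hn : 0 < n) (hK : 0 < K) (hKn : K ≤ n)
    (Pi : Matrix (Fin n) (Fin K) ℝ)
    (hPi_nonneg : ∀ i k, 0 ≤ Pi i k)
    (hPi_rowsum : ∀ i, ∑ k, Pi i k = 1)
    (hPi_rank : Pi.rank = K)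
    (hpure : ∀ k : Fin K, ∃ i : Fin n, ∀ l, Pi i l = if l = k then 1 else 0)
    (Pt : Matrix (Fin K) (Fin K) ℝ)
    (hPt_symm : Pt.IsSymm)
    (hPt_nonneg : ∀ k l, 0 ≤ Pt k l)
    (hPt_rank : Pt.rank = K)
    (hPt_le_one : ∀ k l, Pt k l ≤ 1)
    (hPt_max : ∃ k l, Pt k l = 1)
    (ρ τ : ℝ) (hρ0 : 0 < ρ) (hρ1 : ρ ≤ 1) (hτ : 0 ≤ τ)
    (Om : Matrix (Fin n) (Fin n) ℝ) (hOm : Om = Pi * (ρ • Pt) * Piᵀ)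
    (deg : Fin n → ℝ) (hdeg : ∀ i, deg i = ∑ j, Om i j)
    (hpos : ∀ i, 0 < deg i + τ)
    (Ltau : Matrix (Fin n) (Fin n) ℝ)
    (hLtau : Ltau = Matrix.diagonal (fun i => (Real.sqrt (deg i + τ))⁻¹) * Om *
      Matrix.diagonal (fun i => (Real.sqrt (deg i + τ))⁻¹))
    (Idx : Fin K → Fin n) (hIdx : Pi.submatrix Idx id = 1)
    (V : Matrix (Fin n) (Fin K) ℝ) (e : Fin K → ℝ)
    (hVorth : Vᵀ * V = 1) (he : ∀ k, e k ≠ 0)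
    (hVE : Ltau = V * Matrix.diagonal e * Vᵀ)
    (hPtHerm : Pt.IsHermitian)
    (hH : (Piᵀ * Pi).IsHermitian) :
    ρ * (⨅ l, |hPtHerm.eigenvalues l|) * (⨅ m, hH.eigenvalues m) / (τ + ⨆ j, deg j) ≤
      (⨅ k, |e k|) ∧
    (⨆ k, |e k|) = specNorm Ltau ∧
    specNorm Ltau ≤ (⨆ j, deg j) / (τ + ⨆ j, deg j) :=
  stmt_11_general hK Pi hPi_nonneg Pt hPt_nonneg ρ τ hρ0 hτ Om hOm deg hdeg hpos Ltau hLtau V e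
    hVorth he hVE hPtHerm hH
end

section
/- Under the MMSB setup, the K×K matrix 𝒟_τ^{1/2}(𝓘,𝓘) V(𝓘,:) is nonsingular and ((𝒟_τ^{1/2}(𝓘,𝓘) V(𝓘,:)) (𝒟_τ^{1/2}(𝓘,𝓘) V(𝓘,:))')^{-1} = Π' 𝒟_τ^{-1} Π. -/
/-!
Write `N = 𝒟_τ^{-1/2}` and `Y = N Π`, so that `𝓛_τ = Y (ρP̃) Yᵀ`. From `𝓛_τ V = V E` with `E`
invertible, `V = Y W` for `W = ρP̃ Yᵀ V E⁻¹`. On the pure nodes `Y(𝓘,:) = N(𝓘,𝓘)`, so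
`B = 𝒟_τ^{1/2}(𝓘,𝓘) V(𝓘,:) = W`, and `Vᵀ V = 1` reads `Bᵀ (Yᵀ Y) B = 1` with
`Yᵀ Y = Πᵀ 𝒟_τ⁻¹ Π`. Hence `B` is invertible and `(B Bᵀ)⁻¹ = Yᵀ Y`.
-/

open Matrix BigOperators

namespace Matrix

theorem eq_mul_of_mul_mul_eq_mul_diagonal {m n k R : Type*} [Fintype m] [Fintype n] [Fintype k]
    [DecidableEq n] [Field R] (Y : Matrix m k R) (C : Matrix k m R) (V : Matrix m n R)
    {e : n → R} (he : ∀ i, e i ≠ 0) (h : Y * C * V = V * diagonal e) :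
    V = Y * (C * V * diagonal e⁻¹) := by
  have he_inv : diagonal e * diagonal e⁻¹ = 1 := by
    rw [diagonal_mul_diagonal, ← diagonal_one]
    exact congrArg diagonal (funext fun i => mul_inv_cancel₀ (he i))
  calc V = V * diagonal e * diagonal e⁻¹ := by rw [Matrix.mul_assoc, he_inv, Matrix.mul_one]
    _ = Y * (C * V * diagonal e⁻¹) := by rw [← h]; simp only [Matrix.mul_assoc]

theorem isUnit_and_inv_mul_transpose_eq_of_transpose_mul_mul_eq_one {n R : Type*} [Fintype n]
    [DecidableEq n] [CommRing R] {B G : Matrix n n R} (h : Bᵀ * G * B = 1) :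
    IsUnit B ∧ (B * Bᵀ)⁻¹ = G := by
  have hB : B * (Bᵀ * G) = 1 := mul_eq_one_comm.mp h
  exact ⟨IsUnit.of_mul_eq_one _ hB, inv_eq_right_inv (by rwa [Matrix.mul_assoc])⟩

theorem transpose_mul_self_diagonal_inv_sqrt_mul {m k : Type*} [Fintype m] [DecidableEq m]
    {d : m → ℝ} (hd : ∀ i, 0 ≤ d i) (A : Matrix m k ℝ) :
    (diagonal (fun i => (√(d i))⁻¹) * A)ᵀ * (diagonal (fun i => (√(d i))⁻¹) * A) =
      Aᵀ * diagonal (fun i => (d i)⁻¹) * A := by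
  have hsq : diagonal (fun i => (√(d i))⁻¹) * diagonal (fun i => (√(d i))⁻¹) =
      diagonal (fun i => (d i)⁻¹) := by
    rw [diagonal_mul_diagonal]
    exact congrArg diagonal (funext fun i => by rw [← mul_inv, Real.mul_self_sqrt (hd i)])
  rw [transpose_mul, diagonal_transpose, Matrix.mul_assoc, ← Matrix.mul_assoc _ _ A, hsq,
    Matrix.mul_assoc]

theorem diagonal_sqrt_mul_submatrix_diagonal_inv_sqrt_mul {l m k : Type*} [Fintype l]
    [DecidableEq l] [Fintype m] [DecidableEq m] {d : m → ℝ} (hd : ∀ i, 0 < d i)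
    (A : Matrix m k ℝ) (r : l → m) :
    diagonal (fun j => √(d (r j))) * (diagonal (fun i => (√(d i))⁻¹) * A).submatrix r id =
      A.submatrix r id := by
  ext j c
  simp only [diagonal_mul, submatrix_apply, id_eq]
  rw [← mul_assoc, mul_inv_cancel₀ (Real.sqrt_pos.mpr (hd (r j))).ne', one_mul]

end Matrix

theorem stmt_12_general
    {n K : ℕ}
    (Pi : Matrix (Fin n) (Fin K) ℝ)
    (Pt : Matrix (Fin K) (Fin K) ℝ)
    (ρ τ : ℝ)
    (Om : Matrix (Fin n) (Fin n) ℝ) (hOm : Om = Pi * (ρ • Pt) * Piᵀ)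
    (deg : Fin n → ℝ)
    (hpos : ∀ i, 0 < deg i + τ)
    (Ltau : Matrix (Fin n) (Fin n) ℝ)
    (hLtau : Ltau = Matrix.diagonal (fun i => (Real.sqrt (deg i + τ))⁻¹) * Om *
      Matrix.diagonal (fun i => (Real.sqrt (deg i + τ))⁻¹))
    (Idx : Fin K → Fin n) (hIdx : Pi.submatrix Idx id = 1)
    (V : Matrix (Fin n) (Fin K) ℝ) (e : Fin K → ℝ)
    (hVorth : Vᵀ * V = 1) (he : ∀ k, e k ≠ 0)
    (hVE : Ltau = V * Matrix.diagonal e * Vᵀ)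
    (B : Matrix (Fin K) (Fin K) ℝ)
    (hB : B = Matrix.diagonal (fun k => Real.sqrt (deg (Idx k) + τ)) *
      V.submatrix Idx id) :
    IsUnit B ∧
    (B * Bᵀ)⁻¹ = Piᵀ * Matrix.diagonal (fun i => (deg i + τ)⁻¹) * Pi := by
  obtain ⟨Y, hY⟩ : ∃ Y, Y = diagonal (fun i => (√(deg i + τ))⁻¹) * Pi := ⟨_, rfl⟩
  have hLY : Ltau = Y * (ρ • Pt * Yᵀ) := by
    rw [hLtau, hOm, hY, transpose_mul, diagonal_transpose]
    simp only [Matrix.mul_assoc]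
  obtain ⟨W, hV⟩ : ∃ W : Matrix (Fin K) (Fin K) ℝ, V = Y * W := by
    refine ⟨_, eq_mul_of_mul_mul_eq_mul_diagonal Y (ρ • Pt * Yᵀ) V he ?_⟩
    rw [← hLY, hVE, Matrix.mul_assoc, Matrix.mul_assoc, hVorth, Matrix.mul_one]
  have hBW : B = W := by
    have hsub : V.submatrix Idx id = Y.submatrix Idx id * W := by rw [hV]; rfl
    rw [hB, hsub, ← Matrix.mul_assoc, hY,
      diagonal_sqrt_mul_submatrix_diagonal_inv_sqrt_mul hpos, hIdx, Matrix.one_mul]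
  have hBGB : Bᵀ * (Yᵀ * Y) * B = 1 := by
    rw [hBW, ← hVorth, hV, transpose_mul, Matrix.mul_assoc, Matrix.mul_assoc, Matrix.mul_assoc]
  rw [hY, transpose_mul_self_diagonal_inv_sqrt_mul (fun i => (hpos i).le)] at hBGB
  exact isUnit_and_inv_mul_transpose_eq_of_transpose_mul_mul_eq_one hBGB

/-- identity from the proof of Lemma B.2: the `K×K` matrix
`𝒟_τ^{1/2}(𝓘,𝓘) V(𝓘,:)` is nonsingular and
`((𝒟_τ^{1/2}(𝓘,𝓘) V(𝓘,:)) (𝒟_τ^{1/2}(𝓘,𝓘) V(𝓘,:))')⁻¹ = Π' 𝒟_τ^{-1} Π`. -/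
theorem stmt_12
    {n K : ℕ} (hn : 0 < n) (hK : 0 < K) (hKn : K ≤ n)
    (Pi : Matrix (Fin n) (Fin K) ℝ)
    (hPi_nonneg : ∀ i k, 0 ≤ Pi i k)
    (hPi_rowsum : ∀ i, ∑ k, Pi i k = 1)
    (hPi_rank : Pi.rank = K)
    (hpure : ∀ k : Fin K, ∃ i : Fin n, ∀ l, Pi i l = if l = k then 1 else 0)
    (Pt : Matrix (Fin K) (Fin K) ℝ)
    (hPt_symm : Pt.IsSymm)
    (hPt_nonneg : ∀ k l, 0 ≤ Pt k l)
    (hPt_rank : Pt.rank = K)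
    (hPt_le_one : ∀ k l, Pt k l ≤ 1)
    (hPt_max : ∃ k l, Pt k l = 1)
    (ρ τ : ℝ) (hρ0 : 0 < ρ) (hρ1 : ρ ≤ 1) (hτ : 0 ≤ τ)
    (Om : Matrix (Fin n) (Fin n) ℝ) (hOm : Om = Pi * (ρ • Pt) * Piᵀ)
    (deg : Fin n → ℝ) (hdeg : ∀ i, deg i = ∑ j, Om i j)
    (hpos : ∀ i, 0 < deg i + τ)
    (Ltau : Matrix (Fin n) (Fin n) ℝ)
    (hLtau : Ltau = Matrix.diagonal (fun i => (Real.sqrt (deg i + τ))⁻¹) * Om *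
      Matrix.diagonal (fun i => (Real.sqrt (deg i + τ))⁻¹))
    (Idx : Fin K → Fin n) (hIdx : Pi.submatrix Idx id = 1)
    (V : Matrix (Fin n) (Fin K) ℝ) (e : Fin K → ℝ)
    (hVorth : Vᵀ * V = 1) (he : ∀ k, e k ≠ 0)
    (hVE : Ltau = V * Matrix.diagonal e * Vᵀ)
    (B : Matrix (Fin K) (Fin K) ℝ)
    (hB : B = Matrix.diagonal (fun k => Real.sqrt (deg (Idx k) + τ)) *
      V.submatrix Idx id) :
    IsUnit B ∧
    (B * Bᵀ)⁻¹ = Piᵀ * Matrix.diagonal (fun i => (deg i + τ)⁻¹) * Pi :=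
  stmt_12_general Pi Pt ρ τ Om hOm deg hpos Ltau hLtau Idx hIdx V e hVorth he hVE B hB
end
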